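/- arXiv:2210.14728 — 7 statements merged into one kernel-verified Lean document; each statement's English description precedes it below -/
import Mathlib

section
/- Let λ > 0. If u : ℝ → ℝ is twice continuously differentiable on [0, ∞), satisfies (1/2)·u''(x) + (λ/2)·(u(x) − 1)² = 0 for all x ≥ 0, u(0) = 0, and 0 ≤ u(x) ≤ 1 for all x ≥ 0, then u(x) = 1 − 1/(√(λ/6)·x + 1)² for all x ≥ 0. In particular, the boundary value problem has exactly one solution with values in [0, 1]. -/
/-!
Multiplying `u'' = -λ (u - 1)²` by `u'` shows that the energy `u'² / 2 + λ (u - 1)³ / 3` is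
conserved. Concavity and `0 ≤ u ≤ 1` force `u' ≥ 0`, `u → 1` and `u' → 0` at infinity, so the
energy vanishes and `1 - u` solves `y' = -2 √(λ/6) y^{3/2}`, `y(0) = 1`. This vector field is
Lipschitz on `[0, 1]`, and `(√(λ/6) x + 1)⁻²` solves the same problem, so the two coincide.
-/

open Set Filter Topology

theorem exists_lt_of_hasDerivAt_le_of_neg {f f' : ℝ → ℝ} {a C : ℝ} (hC : C < 0)
    (hf : ContinuousOn f (Ici a)) (hf' : ∀ x > a, HasDerivAt f (f' x) x)
    (hle : ∀ x > a, f' x ≤ C) (b : ℝ) : ∃ x ≥ a, f x < b := by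
  have hlin : ∀ y ≥ a, f y ≤ f a + C * (y - a) := fun y hy => by
    have := (convex_Ici a).image_sub_le_mul_sub_of_deriv_le hf
      (fun x hx => (hf' x (by simpa using hx)).differentiableAt.differentiableWithinAt)
      (fun x hx => (hf' x (by simpa using hx)).deriv ▸ hle x (by simpa using hx))
      a self_mem_Ici y hy hy
    linarith
  obtain ⟨q, hq0, hq⟩ : ∃ q ≥ 0, C * q ≤ -(f a - b + 1) := by
    refine ⟨max 0 ((f a - b + 1) / -C), le_max_left _ _, ?_⟩
    calc C * max 0 ((f a - b + 1) / -C) ≤ C * ((f a - b + 1) / -C) :=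
          mul_le_mul_of_nonpos_left (le_max_right _ _) hC.le
      _ = -(f a - b + 1) := by rw [div_neg, mul_neg, mul_div_cancel₀ _ hC.ne]
  refine ⟨a + q, le_add_of_nonneg_right hq0, ?_⟩
  have := hlin (a + q) (le_add_of_nonneg_right hq0)
  rw [add_sub_cancel_left] at this
  linarith

theorem tendsto_of_monotoneOn_Ici {f : ℝ → ℝ} {a L : ℝ} (hf : MonotoneOn f (Ici a))
    (hle : ∀ x ≥ a, f x ≤ L) (hlt : ∀ l < L, ∃ x ≥ a, l < f x) :
    Tendsto f atTop (𝓝 L) := by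
  refine tendsto_order.2 ⟨fun l hl => ?_, fun l hl => ?_⟩
  · obtain ⟨x, hxa, hx⟩ := hlt l hl
    filter_upwards [eventually_ge_atTop x] with y hy
    exact hx.trans_le (hf hxa (hxa.trans hy) hy)
  · filter_upwards [eventually_ge_atTop a] with y hy
    exact (hle y hy).trans_lt hl

theorem lipschitzOnWith_mul_sqrt :
    LipschitzOnWith (3 / 2) (fun y => y * √y) (Icc 0 1) := by
  refine LipschitzOnWith.of_dist_le_mul fun a ha b hb => ?_
  obtain ⟨s, hs0, hs1, rfl⟩ : ∃ s, 0 ≤ s ∧ s ≤ 1 ∧ s ^ 2 = a :=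
    ⟨√a, Real.sqrt_nonneg a, Real.sqrt_le_one.2 ha.2, Real.sq_sqrt ha.1⟩
  obtain ⟨t, ht0, ht1, rfl⟩ : ∃ t, 0 ≤ t ∧ t ≤ 1 ∧ t ^ 2 = b :=
    ⟨√b, Real.sqrt_nonneg b, Real.sqrt_le_one.2 hb.2, Real.sq_sqrt hb.1⟩
  simp only [Real.dist_eq, Real.sqrt_sq hs0, Real.sqrt_sq ht0]
  have h1 : s ^ 2 * s - t ^ 2 * t = (s - t) * (s ^ 2 + s * t + t ^ 2) := by ring
  have h2 : s ^ 2 - t ^ 2 = (s - t) * (s + t) := by ring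
  rw [h1, h2, abs_mul, abs_mul, abs_of_nonneg (by positivity : 0 ≤ s ^ 2 + s * t + t ^ 2),
    abs_of_nonneg (by positivity : 0 ≤ s + t)]
  push_cast
  have : s ^ 2 + s * t + t ^ 2 ≤ 3 / 2 * (s + t) := by nlinarith
  nlinarith [abs_nonneg (s - t)]

theorem hasDerivAt_inv_sq_linear {c x : ℝ} (hx : 0 < c * x + 1) :
    HasDerivAt (fun y => ((c * y + 1) ^ 2)⁻¹)
      (-(2 * c) * (((c * x + 1) ^ 2)⁻¹ * √((c * x + 1) ^ 2)⁻¹)) x := by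
  have hlin : HasDerivAt (fun y => c * y + 1) c x := by
    simpa using ((hasDerivAt_id x).const_mul c).add_const 1
  refine ((hlin.fun_pow 2).fun_inv (pow_ne_zero 2 hx.ne')).congr_deriv ?_
  rw [Real.sqrt_inv, Real.sqrt_sq hx.le]
  field_simp
  ring

structure IsBoundedSolution (lam : ℝ) (u u' : ℝ → ℝ) : Prop where
  hasDerivWithinAt : ∀ x ≥ 0, HasDerivWithinAt u (u' x) (Ici 0) x
  hasDerivWithinAt_deriv : ∀ x ≥ 0, HasDerivWithinAt u' (-lam * (u x - 1) ^ 2) (Ici 0) x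
  nonneg : ∀ x ≥ 0, 0 ≤ u x
  le_one : ∀ x ≥ 0, u x ≤ 1

noncomputable def energy (lam : ℝ) (u u' : ℝ → ℝ) (x : ℝ) : ℝ :=
  u' x ^ 2 / 2 + lam / 3 * (u x - 1) ^ 3

namespace IsBoundedSolution

variable {lam : ℝ} {u u' : ℝ → ℝ}

theorem continuousOn (hs : IsBoundedSolution lam u u') : ContinuousOn u (Ici 0) :=
  fun x hx => (hs.hasDerivWithinAt x hx).continuousWithinAt

theorem continuousOn_deriv (hs : IsBoundedSolution lam u u') : ContinuousOn u' (Ici 0) :=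
  fun x hx => (hs.hasDerivWithinAt_deriv x hx).continuousWithinAt

theorem hasDerivAt (hs : IsBoundedSolution lam u u') {x : ℝ} (hx : 0 < x) :
    HasDerivAt u (u' x) x :=
  (hs.hasDerivWithinAt x hx.le).hasDerivAt (Ici_mem_nhds hx)

theorem hasDerivAt_deriv (hs : IsBoundedSolution lam u u') {x : ℝ} (hx : 0 < x) :
    HasDerivAt u' (-lam * (u x - 1) ^ 2) x :=
  (hs.hasDerivWithinAt_deriv x hx.le).hasDerivAt (Ici_mem_nhds hx)

theorem antitoneOn_deriv (hs : IsBoundedSolution lam u u') (hlam : 0 ≤ lam) :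
    AntitoneOn u' (Ici 0) :=
  antitoneOn_of_hasDerivWithinAt_nonpos (convex_Ici 0) hs.continuousOn_deriv
    (fun x hx => (hs.hasDerivAt_deriv (by simpa using hx)).hasDerivWithinAt)
    (fun x _ => by nlinarith [sq_nonneg (u x - 1)])

/-- Were `u'` negative somewhere, `u` would decrease at least linearly from there on. -/
theorem deriv_nonneg (hs : IsBoundedSolution lam u u') (hlam : 0 ≤ lam) {x : ℝ} (hx : 0 ≤ x) :
    0 ≤ u' x := by
  by_contra! hneg
  obtain ⟨y, hy, hlt⟩ := exists_lt_of_hasDerivAt_le_of_neg hneg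
    (hs.continuousOn.mono (Ici_subset_Ici.2 hx)) (fun y hy => hs.hasDerivAt (hx.trans_lt hy))
    (fun y hy => hs.antitoneOn_deriv hlam hx (hx.trans hy.le) hy.le) 0
  exact hlt.not_ge (hs.nonneg y (hx.trans hy))

theorem monotoneOn (hs : IsBoundedSolution lam u u') (hlam : 0 ≤ lam) : MonotoneOn u (Ici 0) :=
  monotoneOn_of_hasDerivWithinAt_nonneg (convex_Ici 0) hs.continuousOn
    (fun x hx => (hs.hasDerivAt (by simpa using hx)).hasDerivWithinAt)
    (fun x hx => hs.deriv_nonneg hlam (le_of_lt (by simpa using hx)))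

/-- If `u ≤ l < 1`, then `u'' ≤ -λ (1 - l)²` and `u'` would become negative. -/
theorem tendsto_atTop (hs : IsBoundedSolution lam u u') (hlam : 0 < lam) :
    Tendsto u atTop (𝓝 1) := by
  refine tendsto_of_monotoneOn_Ici (hs.monotoneOn hlam.le) hs.le_one fun l hl => ?_
  by_contra! hle
  obtain ⟨y, hy, hlt⟩ := exists_lt_of_hasDerivAt_le_of_neg
    (by nlinarith [sq_pos_of_pos (sub_pos.2 hl)] : -lam * (1 - l) ^ 2 < 0)
    hs.continuousOn_deriv (fun y hy => hs.hasDerivAt_deriv hy) (fun y hy => by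
      have := hle y hy.le
      nlinarith [hs.le_one y hy.le, mul_le_mul_of_nonneg_left this hlam.le]) 0
  exact hlt.not_ge (hs.deriv_nonneg hlam.le hy)

/-- If `u' ≥ ε > 0`, then `u` would grow at least linearly and exceed `1`. -/
theorem tendsto_deriv_atTop (hs : IsBoundedSolution lam u u') (hlam : 0 ≤ lam) :
    Tendsto u' atTop (𝓝 0) := by
  have hneg : Tendsto (fun x => -u' x) atTop (𝓝 0) := by
    refine tendsto_of_monotoneOn_Ici
      (fun x hx y hy hxy => neg_le_neg (hs.antitoneOn_deriv hlam hx hy hxy))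
      (fun x hx => neg_nonpos.2 (hs.deriv_nonneg hlam hx)) fun l hl => ?_
    by_contra! hle
    obtain ⟨y, hy, hlt⟩ := exists_lt_of_hasDerivAt_le_of_neg hl hs.continuousOn.neg
      (fun y hy => (hs.hasDerivAt hy).neg) (fun y hy => hle y hy.le) (-1)
    linarith [hs.le_one y hy, show -u y < -1 from hlt]
  simpa using hneg.neg

theorem energy_eq_energy_zero (hs : IsBoundedSolution lam u u') {x : ℝ} (hx : 0 ≤ x) :
    energy lam u u' x = energy lam u u' 0 := by
  have hderiv : ∀ y ≥ 0, HasDerivWithinAt (energy lam u u') 0 (Ici 0) y := fun y hy => by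
    have := (((hs.hasDerivWithinAt_deriv y hy).fun_pow 2).div_const 2).fun_add
      ((((hs.hasDerivWithinAt y hy).sub_const 1).fun_pow 3).const_mul (lam / 3))
    exact this.congr_deriv (by ring)
  exact constant_of_has_deriv_right_zero
    (fun y hy => (hderiv y hy.1).continuousWithinAt.mono Icc_subset_Ici_self)
    (fun y hy => (hderiv y hy.1).mono (Ici_subset_Ici.2 hy.1)) x ⟨hx, le_rfl⟩

theorem energy_eq_zero (hs : IsBoundedSolution lam u u') (hlam : 0 < lam) {x : ℝ} (hx : 0 ≤ x) :
    energy lam u u' x = 0 := by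
  have hlim : Tendsto (energy lam u u') atTop (𝓝 0) := by
    show Tendsto (fun x => u' x ^ 2 / 2 + lam / 3 * (u x - 1) ^ 3) atTop (𝓝 0)
    have := (((hs.tendsto_deriv_atTop hlam.le).pow 2).div_const 2).add
      ((((hs.tendsto_atTop hlam).sub_const 1).pow 3).const_mul (lam / 3))
    simpa using this
  have hconst : Tendsto (energy lam u u') atTop (𝓝 (energy lam u u' 0)) :=
    tendsto_const_nhds.congr' <| (eventually_ge_atTop 0).mono fun y hy =>
      (hs.energy_eq_energy_zero hy).symm
  rw [hs.energy_eq_energy_zero hx, tendsto_nhds_unique hconst hlim]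

theorem deriv_eq (hs : IsBoundedSolution lam u u') (hlam : 0 < lam) {x : ℝ} (hx : 0 ≤ x) :
    u' x = 2 * √(lam / 6) * ((1 - u x) * √(1 - u x)) := by
  have hu : 0 ≤ 1 - u x := sub_nonneg.2 (hs.le_one x hx)
  have hE := hs.energy_eq_zero hlam hx
  rw [energy] at hE
  rw [← pow_left_inj₀ (hs.deriv_nonneg hlam.le hx) (by positivity) two_ne_zero, mul_pow, mul_pow,
    mul_pow, Real.sq_sqrt (by positivity), Real.sq_sqrt hu]
  linear_combination 2 * hE

theorem eq_one_sub_inv_sq (hs : IsBoundedSolution lam u u') (hlam : 0 < lam) (h0 : u 0 = 0)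
    {x : ℝ} (hx : 0 ≤ x) : u x = 1 - ((√(lam / 6) * x + 1) ^ 2)⁻¹ := by
  set c := √(lam / 6)
  have hct : ∀ t ≥ 0, 1 ≤ c * t + 1 := fun t ht => le_add_of_nonneg_left (by positivity)
  have hw : ∀ t ≥ 0, HasDerivAt (fun t => ((c * t + 1) ^ 2)⁻¹)
      (-(2 * c) * (((c * t + 1) ^ 2)⁻¹ * √((c * t + 1) ^ 2)⁻¹)) t := fun t ht =>
    hasDerivAt_inv_sq_linear (one_pos.trans_le (hct t ht))
  have hg : ∀ t ≥ 0, HasDerivWithinAt (fun t => 1 - u t)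
      (-(2 * c) * ((1 - u t) * √(1 - u t))) (Ici t) t := fun t ht => by
    have := ((hs.hasDerivWithinAt t ht).const_sub 1).mono (Ici_subset_Ici.2 ht)
    rw [hs.deriv_eq hlam ht] at this
    exact this.congr_deriv (by ring)
  have heq : EqOn (fun t => 1 - u t) (fun t => ((c * t + 1) ^ 2)⁻¹) (Icc 0 x) :=
    ODE_solution_unique_of_mem_Icc_right (v := fun _ y => -(2 * c) • (y * √y))
      (s := fun _ => Icc 0 1)
      (fun _ _ => (lipschitzWith_smul _).comp_lipschitzOnWith lipschitzOnWith_mul_sqrt)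
      ((continuousOn_const.sub hs.continuousOn).mono Icc_subset_Ici_self) (fun t ht => hg t ht.1)
      (fun t ht => ⟨sub_nonneg.2 (hs.le_one t ht.1), by linarith [hs.nonneg t ht.1]⟩)
      (fun t ht => (hw t ht.1).continuousAt.continuousWithinAt)
      (fun t ht => (hw t ht.1).hasDerivWithinAt)
      (fun t ht => ⟨by positivity, inv_le_one_of_one_le₀ (one_le_pow₀ (hct t ht.1))⟩)
      (by simp [h0])
  have := heq ⟨hx, le_rfl⟩
  simp only at this
  linarith

end IsBoundedSolution

theorem IsBoundedSolution.of_contDiffOn {lam : ℝ} {u : ℝ → ℝ} (hreg : ContDiffOn ℝ 2 u (Ici 0))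
    (hode : ∀ x ≥ 0,
      (1 / 2) * iteratedDerivWithin 2 u (Ici 0) x + (lam / 2) * (u x - 1) ^ 2 = 0)
    (hbd : ∀ x ≥ 0, 0 ≤ u x ∧ u x ≤ 1) :
    IsBoundedSolution lam u (derivWithin u (Ici 0)) where
  hasDerivWithinAt x hx := (hreg.differentiableOn two_ne_zero x hx).hasDerivWithinAt
  hasDerivWithinAt_deriv x hx := by
    have hdiff := (hreg.derivWithin (uniqueDiffOn_Ici 0) (m := 1) (by norm_num)).differentiableOn
      one_ne_zero x hx
    have hsecond : derivWithin (derivWithin u (Ici 0)) (Ici 0) x = -lam * (u x - 1) ^ 2 := by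
      have := hode x hx
      rw [iteratedDerivWithin_succ', iteratedDerivWithin_one] at this
      linarith
    exact hsecond ▸ hdiff.hasDerivWithinAt
  nonneg x hx := (hbd x hx).1
  le_one x hx := (hbd x hx).2

/-- Uniqueness: any C² solution on [0,∞) of (1/2)·u'' + (λ/2)·(u − 1)² = 0 with
u(0) = 0 and 0 ≤ u ≤ 1 equals 1 − 1/(√(λ/6)·x + 1)². -/
theorem stmt_1 (lam : ℝ) (hlam : 0 < lam) (u : ℝ → ℝ)
    (hreg : ContDiffOn ℝ 2 u (Set.Ici 0))
    (hode : ∀ x ≥ 0, (1 / 2) * iteratedDerivWithin 2 u (Set.Ici 0) x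
      + (lam / 2) * (u x - 1) ^ 2 = 0)
    (h0 : u 0 = 0)
    (hbd : ∀ x ≥ 0, 0 ≤ u x ∧ u x ≤ 1) :
    ∀ x ≥ 0, u x = 1 - 1 / (Real.sqrt (lam / 6) * x + 1) ^ 2 := fun x hx => by
  rw [one_div]
  exact (IsBoundedSolution.of_contDiffOn hreg hode hbd).eq_one_sub_inv_sq hlam h0 hx
end

section
/- Let λ > 0 and t₀ > 0. Suppose u : ℝ → ℝ is twice continuously differentiable on [0, ∞), satisfies (1/2)·u''(x) + (λ/2)·(u(x) − 1)² = 0 for all x ≥ 0, u(0) = 0, and 0 ≤ u(x) ≤ 1 for all x ≥ 0. Suppose r : [0, ∞) × [0, t₀] → ℝ is continuous, is twice continuously differentiable in x and once in t on the interior, satisfies the parabolic equation ∂r/∂t = (1/2)·∂²r/∂x² + (λ/2)·(r − 1)² there, satisfies 0 ≤ r(x, t) ≤ 1 for all (x, t), satisfies r(0, t) = 0 for all t ∈ [0, t₀], satisfies r(x, 0) ≤ u(x) for all x ≥ 0, and satisfies sup_{t ∈ [0, t₀]} |u(x) − r(x, t)| → 0 as x → ∞. Then r(x, t) ≤ u(x)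 for all x ≥ 0 and t ∈ [0, t₀]. -/
/-!
Fix ε > 0, a time s < t₀ and, by the uniform agreement at infinity, a point X with
r(X, ·) − u(X) < ε on [0, s]. On [0, X] × [0, s] the function r − u − εt attains its maximum.
It is below ε on the parabolic boundary x = 0, x = X, t = 0. At an interior maximum the
penalty gives ∂ₜr ≥ ε, and ∂ₓₓr ≤ u'', so subtracting the two equations leaves
(λ/2)((r − 1)² − (u − 1)²) ≥ ε > 0, which for r ≤ 1 forces r < u. Hence r − u < ε(1 + t)
for t < t₀; let ε → 0 and reach t = t₀ by continuity.
-/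

open Filter Set Topology

theorem IsLocalMaxOn.hasDerivWithinAt_Iic_nonneg {f : ℝ → ℝ} {a f' : ℝ}
    (h : IsLocalMaxOn f (Iic a) a) (hf : HasDerivWithinAt f f' (Iic a) a) : 0 ≤ f' := by
  simpa using h.hasFDerivWithinAt_nonpos hf.hasFDerivWithinAt (y := -1)
    (mem_posTangentConeAt_of_segment_subset (by
      rw [segment_symm, segment_eq_Icc (by linarith)]; exact Icc_subset_Iic_self))

theorem IsLocalMax.deriv_deriv_nonpos {f : ℝ → ℝ} {a : ℝ} (h : IsLocalMax f a)
    (hf : ∀ᶠ x in 𝓝 a, DifferentiableAt ℝ f x) : deriv (deriv f) a ≤ 0 := by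
  by_contra! hpos
  have hright : ∀ᶠ x in 𝓝[>] a, 0 < deriv f x :=
    deriv_pos_right_of_sign_deriv <| nhdsWithin_le_nhds <|
      eventually_nhdsWithin_sign_eq_of_deriv_pos hpos h.deriv_eq_zero
  obtain ⟨m, ham, hsub⟩ := mem_nhdsGT_iff_exists_Ioo_subset.mp
    (hright.and (nhdsWithin_le_nhds (hf.and h)))
  have hmono : StrictMonoOn f (Ico a m) := by
    refine strictMonoOn_of_deriv_pos (convex_Ico a m) (fun x hx => ?_) fun x hx => ?_
    · rcases hx.1.eq_or_lt with rfl | hax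
      · exact hf.self_of_nhds.continuousAt.continuousWithinAt
      · exact (hsub ⟨hax, hx.2⟩).2.1.continuousAt.continuousWithinAt
    · rw [interior_Ico] at hx
      exact (hsub hx).1
  obtain ⟨q, haq, hqm⟩ := exists_between (mem_Ioi.mp ham)
  exact (hmono ⟨le_rfl, ham⟩ ⟨haq.le, hqm⟩ haq).not_ge (hsub ⟨haq, hqm⟩).2.2

theorem lt_of_isLocalMax_of_parabolic {lam ε a b : ℝ} {u : ℝ → ℝ} {r : ℝ → ℝ → ℝ}
    (hlam : 0 ≤ lam) (hε : 0 < ε) (hr1 : r a b ≤ 1)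
    (hu : ContDiffAt ℝ 2 u a) (hrx : ContDiffAt ℝ 2 (fun x => r x b) a)
    (hrt : DifferentiableAt ℝ (fun s => r a s) b)
    (hode : (1 / 2) * deriv (deriv u) a + (lam / 2) * (u a - 1) ^ 2 = 0)
    (hpde : deriv (fun s => r a s) b
      = (1 / 2) * deriv (deriv fun y => r y b) a + (lam / 2) * (r a b - 1) ^ 2)
    (hmax_x : IsLocalMax (fun x => r x b - u x) a)
    (hmax_t : IsLocalMaxOn (fun s => r a s - ε * s) (Iic b) b) :
    r a b < u a := by
  have htime : ε ≤ deriv (fun s => r a s) b := by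
    have := hmax_t.hasDerivWithinAt_Iic_nonneg
      (hrt.hasDerivAt.sub ((hasDerivAt_id b).const_mul ε)).hasDerivWithinAt
    simp only [mul_one] at this
    linarith
  have hspace : deriv (deriv fun y => r y b) a ≤ deriv (deriv u) a := by
    have hdiff : ∀ᶠ x in 𝓝 a, DifferentiableAt ℝ (fun x => r x b - u x) x :=
      ((hrx.sub hu).eventually (by simp)).mono fun x hx => hx.differentiableAt (by simp)
    have hsub := iteratedDeriv_fun_sub hrx hu
    simp only [iteratedDeriv_succ, iteratedDeriv_zero] at hsub
    linarith [hmax_x.deriv_deriv_nonpos hdiff]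
  have hsq : (1 - u a) ^ 2 < (1 - r a b) ^ 2 := by nlinarith
  have := abs_lt_of_sq_lt_sq hsq (by linarith)
  linarith [le_abs_self (1 - u a)]

theorem sub_lt_mul_of_mem_rectangle {lam t₀ ε X T x t : ℝ} {u : ℝ → ℝ} {r : ℝ → ℝ → ℝ}
    (hlam : 0 ≤ lam) (hε : 0 < ε) (hT : T < t₀)
    (hureg : ContDiffOn ℝ 2 u (Ici 0))
    (huode : ∀ x ≥ 0, (1 / 2) * iteratedDerivWithin 2 u (Ici 0) x
      + (lam / 2) * (u x - 1) ^ 2 = 0)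
    (hu0 : u 0 = 0)
    (hrc : ContinuousOn (fun p : ℝ × ℝ => r p.1 p.2) (Ici 0 ×ˢ Icc 0 t₀))
    (hrx : ∀ t ∈ Ioo 0 t₀, ContDiffOn ℝ 2 (fun x => r x t) (Ioi 0))
    (hrt : ∀ x ∈ Ioi (0 : ℝ), ContDiffOn ℝ 1 (fun t => r x t) (Ioo 0 t₀))
    (hpde : ∀ x ∈ Ioi (0 : ℝ), ∀ t ∈ Ioo 0 t₀,
      deriv (fun s => r x s) t
        = (1 / 2) * deriv (deriv fun y => r y t) x + (lam / 2) * (r x t - 1) ^ 2)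
    (hr1 : ∀ x ≥ 0, ∀ t ∈ Icc 0 t₀, r x t ≤ 1)
    (hr0 : ∀ t ∈ Icc 0 t₀, r 0 t = 0)
    (hinit : ∀ x ≥ 0, r x 0 ≤ u x)
    (hX : ∀ t ∈ Icc 0 T, r X t - u X < ε)
    (hx : x ∈ Icc 0 X) (ht : t ∈ Icc 0 T) :
    r x t - u x < ε * (1 + t) := by
  have hsub : Icc 0 X ×ˢ Icc 0 T ⊆ Ici 0 ×ˢ Icc 0 t₀ :=
    prod_mono Icc_subset_Ici_self (Icc_subset_Icc_right hT.le)
  have hcont : ContinuousOn (fun p : ℝ × ℝ => r p.1 p.2 - u p.1 - ε * p.2)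
      (Icc 0 X ×ˢ Icc 0 T) :=
    ((hrc.mono hsub).sub (hureg.continuousOn.comp continuousOn_fst fun p hp => (hsub hp).1)).sub
      (continuous_const.mul continuous_snd).continuousOn
  obtain ⟨⟨a, b⟩, ⟨⟨ha0, haX⟩, hb0, hbT⟩, hmax⟩ :=
    (isCompact_Icc.prod isCompact_Icc).exists_isMaxOn ⟨(x, t), hx, ht⟩ hcont
  have hmax : ∀ y ∈ Icc 0 X, ∀ s ∈ Icc 0 T, r y s - u y - ε * s ≤ r a b - u a - ε * b :=
    fun y hy s hs => hmax (show (y, s) ∈ _ from ⟨hy, hs⟩)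
  suffices r a b - u a - ε * b < ε by nlinarith [hmax x hx t ht]
  have hbt₀ : b ∈ Icc 0 t₀ := ⟨hb0, hbT.trans hT.le⟩
  rcases ha0.eq_or_lt with rfl | ha
  · rw [hr0 b hbt₀, hu0]
    nlinarith
  rcases haX.eq_or_lt with rfl | haX
  · nlinarith [hX b ⟨hb0, hbT⟩]
  rcases hb0.eq_or_lt with rfl | hb
  · linarith [hinit a ha.le]
  have hb' : b ∈ Ioo 0 t₀ := ⟨hb, hbT.trans_lt hT⟩
  have hua : ContDiffAt ℝ 2 u a := hureg.contDiffAt (Ici_mem_nhds ha)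
  have hode : (1 / 2) * deriv (deriv u) a + (lam / 2) * (u a - 1) ^ 2 = 0 := by
    simpa only [iteratedDerivWithin_eq_iteratedDeriv (uniqueDiffOn_Ici 0) hua ha.le,
      iteratedDeriv_succ, iteratedDeriv_zero] using huode a ha.le
  have hmax_x : IsLocalMax (fun y => r y b - u y) a := by
    filter_upwards [Ioo_mem_nhds ha haX] with y hy
    linarith [hmax y ⟨hy.1.le, hy.2.le⟩ b ⟨hb0, hbT⟩]
  have hmax_t : IsLocalMaxOn (fun s => r a s - ε * s) (Iic b) b := by
    filter_upwards [inter_mem_nhdsWithin (Iic b) (Ioi_mem_nhds hb)] with s hs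
    linarith [hmax a ⟨ha0, haX.le⟩ s ⟨hs.2.out.le, hs.1.out.trans hbT⟩]
  have := lt_of_isLocalMax_of_parabolic hlam hε (hr1 a ha.le b hbt₀) hua
    ((hrx b hb').contDiffAt (Ioi_mem_nhds ha))
    (((hrt a ha).contDiffAt (Ioo_mem_nhds hb hb'.2)).differentiableAt (by simp))
    hode (hpde a ha b hb') hmax_x hmax_t
  nlinarith

theorem eventually_forall_lt_of_tendsto_iSup {α ι β : Type*} [ConditionallyCompleteLinearOrder β]
    [TopologicalSpace β] [ClosedIciTopology β] {l : Filter α} {g : α → ι → β} {c ε : β}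
    (hg : Tendsto (fun x => ⨆ i, g x i) l (𝓝 c)) (hbdd : ∀ᶠ x in l, BddAbove (range (g x)))
    (hε : c < ε) : ∀ᶠ x in l, ∀ i, g x i < ε := by
  filter_upwards [hg.eventually (eventually_lt_nhds hε), hbdd] with x hx hb i
  exact (le_ciSup hb i).trans_lt hx

/-- Maximum-principle comparison: a stationary solution u dominates any bounded
solution r of the parabolic equation starting below it, vanishing at the
spatial boundary, and agreeing with u at infinity uniformly in t. -/
theorem stmt_3 (lam t₀ : ℝ) (hlam : 0 < lam) (ht₀ : 0 < t₀)
    (u : ℝ → ℝ) (hureg : ContDiffOn ℝ 2 u (Set.Ici 0))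
    (huode : ∀ x ≥ 0, (1 / 2) * iteratedDerivWithin 2 u (Set.Ici 0) x
      + (lam / 2) * (u x - 1) ^ 2 = 0)
    (hu0 : u 0 = 0)
    (hubd : ∀ x ≥ 0, 0 ≤ u x ∧ u x ≤ 1)
    (r : ℝ → ℝ → ℝ)
    (hrc : ContinuousOn (fun p : ℝ × ℝ => r p.1 p.2) (Set.Ici 0 ×ˢ Set.Icc 0 t₀))
    (hrx : ∀ t ∈ Set.Ioo 0 t₀, ContDiffOn ℝ 2 (fun x => r x t) (Set.Ioi 0))
    (hrt : ∀ x ∈ Set.Ioi (0 : ℝ), ContDiffOn ℝ 1 (fun t => r x t) (Set.Ioo 0 t₀))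
    (hpde : ∀ x ∈ Set.Ioi (0 : ℝ), ∀ t ∈ Set.Ioo 0 t₀,
      deriv (fun s => r x s) t
        = (1 / 2) * deriv (deriv fun y => r y t) x + (lam / 2) * (r x t - 1) ^ 2)
    (hrbd : ∀ x ≥ 0, ∀ t ∈ Set.Icc 0 t₀, 0 ≤ r x t ∧ r x t ≤ 1)
    (hr0 : ∀ t ∈ Set.Icc 0 t₀, r 0 t = 0)
    (hinit : ∀ x ≥ 0, r x 0 ≤ u x)
    (hinf : Filter.Tendsto (fun x => ⨆ t : Set.Icc 0 t₀, |u x - r x t|)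
      Filter.atTop (nhds 0)) :
    ∀ x ≥ 0, ∀ t ∈ Set.Icc 0 t₀, r x t ≤ u x := by
  intro x hx t ht
  have hbdd : ∀ᶠ y in atTop, BddAbove (range fun τ : Icc 0 t₀ => |u y - r y τ|) := by
    filter_upwards [eventually_ge_atTop 0] with y hy
    refine ⟨1, forall_mem_range.mpr fun τ => abs_sub_le_iff.mpr ?_⟩
    constructor <;> linarith [hubd y hy, hrbd y hy τ τ.2]
  have hbelow : ∀ s ∈ Ico 0 t₀, r x s ≤ u x := by
    intro s hs
    refine le_of_forall_pos_lt_add fun δ hδ => ?_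
    have hε : 0 < δ / (1 + s) := by have := hs.1; positivity
    obtain ⟨X, hXsup, hxX⟩ :=
      ((eventually_forall_lt_of_tendsto_iSup hinf hbdd hε).and (eventually_ge_atTop x)).exists
    have := sub_lt_mul_of_mem_rectangle hlam.le hε hs.2 hureg huode hu0 hrc hrx hrt hpde
      (fun y hy τ hτ => (hrbd y hy τ hτ).2) hr0 hinit
      (fun τ hτ => (abs_sub_lt_iff.mp (hXsup ⟨τ, hτ.1, hτ.2.trans hs.2.le⟩)).2)
      ⟨hx, hxX⟩ ⟨hs.1, le_rfl⟩
    rwa [div_mul_cancel₀ _ (by linarith [hs.1]), sub_lt_iff_lt_add'] at this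
  have hcont : ContinuousOn (fun s => r x s) (Icc 0 t₀) :=
    hrc.comp (Continuous.prodMk_right x).continuousOn fun s hs => ⟨hx, hs⟩
  rw [← closure_Ico ht₀.ne] at hcont ht
  exact le_on_closure hbelow hcont continuousOn_const ht
end

section
/- Let λ > 0 and t₀ > 0. Suppose u : ℝ → ℝ is twice continuously differentiable on [0, ∞), satisfies (1/2)·u''(x) + (λ/2)·(u(x) − 1)² = 0 for all x ≥ 0, u(0) = 0, and 0 ≤ u(x) ≤ 1 for all x ≥ 0. Suppose s : [0, ∞) × [0, t₀] → ℝ is continuous, is twice continuously differentiable in x and once in t on the interior, satisfies the parabolic equation ∂s/∂t = (1/2)·∂²s/∂x² + (λ/2)·(s − 1)² there, satisfies 0 ≤ s(x, t) ≤ 1 for all (x, t), satisfies s(0, t) ≥ 0 for all t ∈ [0, t₀], satisfies s(x, 0) ≥ u(x) for all x ≥ 0, and satisfies sup_{t ∈ [0, t₀]} |u(x) − s(x, t)| → 0 as x → ∞. Then u(x) ≤ s(x, t) for all x ≥ 0 and t ∈ [0, t₀]. -/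
/-!
The difference `v = s - u` obeys a minimum principle on each half-strip `[0, ∞) × [0, T]` with
`T < t₀`: it is nonnegative at `t = 0` and at `x = 0`, tends to `0` as `x → ∞` uniformly in `t`,
and at a point where `v < 0` and `v(·, t)` has a spatial minimum,
`∂ₜs = ½ s'' + (λ/2)(s - 1)² ≥ ½ u'' + (λ/2)(s - 1)² = (λ/2)((s - 1)² - (u - 1)²) ≥ 0`
since `s < u ≤ 1`. Adding the penalty `ε t` to `v` makes the time derivative strictly negative
at the minimum over a compact rectangle, which is then impossible in the interior. The time
`t₀` itself, where the equation is not assumed, is reached by continuity in `t`.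
-/

open Set Filter Topology

lemma HasDerivAt.nonpos_of_isMinOn_Ioc {g : ℝ → ℝ} {g' a c : ℝ} (hac : a < c)
    (hg : HasDerivAt g g' c) (hmin : IsMinOn g (Ioc a c) c) : g' ≤ 0 := by
  have hdir : a - c ∈ posTangentConeAt (Ioc a c) c :=
    sub_mem_posTangentConeAt_of_openSegment_subset <| by
      rw [openSegment_symm, openSegment_eq_Ioo hac]; exact Ioo_subset_Ioc_self
  have := hmin.localize.hasFDerivWithinAt_nonneg hg.hasDerivWithinAt.hasFDerivWithinAt hdir
  rw [ContinuousLinearMap.toSpanSingleton_apply, smul_eq_mul] at this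
  nlinarith

lemma IsLocalMin.deriv_deriv_nonneg {f : ℝ → ℝ} {a : ℝ} (hmin : IsLocalMin f a)
    (hf : ContinuousAt f a) : 0 ≤ deriv (deriv f) a := by
  by_contra! hneg
  have hmax := isLocalMax_of_deriv_deriv_neg hneg hmin.deriv_eq_zero hf
  have hconst : f =ᶠ[𝓝 a] fun _ => f a :=
    (hmin.and hmax).mono fun x hx => le_antisymm hx.2 hx.1
  have hderiv : deriv f =ᶠ[𝓝 a] fun _ => 0 :=
    hconst.eventually_nhds.mono fun x (hx : f =ᶠ[𝓝 x] _) => by rw [hx.deriv_eq, deriv_const]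
  rw [hderiv.deriv_eq, deriv_const] at hneg
  exact lt_irrefl 0 hneg

lemma deriv_deriv_sub {f g : ℝ → ℝ} {x : ℝ} (hf : ContDiffAt ℝ 2 f x) (hg : ContDiffAt ℝ 2 g x) :
    deriv (deriv fun y => f y - g y) x = deriv (deriv f) x - deriv (deriv g) x := by
  have hderiv : deriv (fun y => f y - g y) =ᶠ[𝓝 x] fun y => deriv f y - deriv g y := by
    filter_upwards [hf.eventually (by simp), hg.eventually (by simp)] with y hfy hgy
    exact deriv_fun_sub (hfy.differentiableAt (by simp)) (hgy.differentiableAt (by simp))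
  rw [hderiv.deriv_eq]
  exact deriv_fun_sub ((hf.derivWithin (m := 1) (by norm_num)).differentiableAt one_ne_zero)
    ((hg.derivWithin (m := 1) (by norm_num)).differentiableAt one_ne_zero)

lemma iteratedDerivWithin_two_Ici {f : ℝ → ℝ} {a x : ℝ} (hf : ContDiffOn ℝ 2 f (Ici a))
    (hx : a < x) : iteratedDerivWithin 2 f (Ici a) x = deriv (deriv f) x := by
  rw [iteratedDerivWithin_eq_iteratedDeriv (uniqueDiffOn_Ici a) (hf.contDiffAt (Ici_mem_nhds hx))
    hx.le, iteratedDeriv_succ, iteratedDeriv_one]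

lemma Filter.eventually_forall_le_of_tendsto_iSup_abs {α ι : Type*} {l : Filter α}
    {f : α → ι → ℝ} (hbdd : ∀ᶠ a in l, BddAbove (range fun i => |f a i|))
    (h : Tendsto (fun a => ⨆ i, |f a i|) l (𝓝 0)) {δ : ℝ} (hδ : 0 < δ) :
    ∀ᶠ a in l, ∀ i, f a i ≤ δ := by
  filter_upwards [hbdd, h.eventually_lt_const hδ] with a hb hlt i
  exact (le_abs_self _).trans ((le_ciSup hb i).trans hlt.le)

lemma reaction_diffusion_rhs_nonneg_of_isLocalMin_sub {lam : ℝ} (hlam : 0 < lam) {f u : ℝ → ℝ}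
    {x : ℝ} (hf : ContDiffAt ℝ 2 f x) (hu : ContDiffAt ℝ 2 u x)
    (hu'' : deriv (deriv u) x = -lam * (u x - 1) ^ 2) (hu1 : u x ≤ 1) (hlt : f x < u x)
    (hmin : IsLocalMin (fun y => f y - u y) x) :
    0 ≤ (1 / 2) * deriv (deriv f) x + (lam / 2) * (f x - 1) ^ 2 := by
  have hcurv : deriv (deriv u) x ≤ deriv (deriv f) x := by
    have := hmin.deriv_deriv_nonneg (hf.continuousAt.sub hu.continuousAt)
    rw [deriv_deriv_sub hf hu] at this
    linarith
  have hsq : (u x - 1) ^ 2 ≤ (f x - 1) ^ 2 := by nlinarith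
  nlinarith [mul_le_mul_of_nonneg_left hsq hlam.le]

section MinimumPrinciple

variable {v : ℝ → ℝ → ℝ} {a b T m : ℝ}

lemma minimum_principle_penalized {ε : ℝ} (hε : 0 < ε) (hm : m ≤ 0)
    (hv : ContinuousOn (fun p : ℝ × ℝ => v p.1 p.2) (Icc a b ×ˢ Icc 0 T))
    (h_bottom : ∀ x ∈ Icc a b, m ≤ v x 0) (h_left : ∀ t ∈ Icc 0 T, m ≤ v a t)
    (h_right : ∀ t ∈ Icc 0 T, m ≤ v b t)
    (hv_diff : ∀ x ∈ Ioo a b, ∀ t ∈ Ioc 0 T, DifferentiableAt ℝ (v x) t)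
    (h_interior : ∀ x ∈ Ioo a b, ∀ t ∈ Ioc 0 T, v x t < 0 →
      IsLocalMin (fun y => v y t) x → 0 ≤ deriv (v x) t) :
    ∀ x ∈ Icc a b, ∀ t ∈ Icc 0 T, m ≤ v x t + ε * t := by
  intro x hx t ht
  have hw : ContinuousOn (fun p : ℝ × ℝ => v p.1 p.2 + ε * p.2) (Icc a b ×ˢ Icc 0 T) :=
    hv.add (by fun_prop)
  obtain ⟨⟨x₁, t₁⟩, ⟨hx₁, ht₁⟩, hmin⟩ :=
    (isCompact_Icc.prod isCompact_Icc).exists_isMinOn ⟨(x, t), hx, ht⟩ hw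
  have hle : ∀ y ∈ Icc a b, ∀ τ ∈ Icc 0 T, v x₁ t₁ + ε * t₁ ≤ v y τ + ε * τ :=
    fun y hy τ hτ => isMinOn_iff.1 hmin (y, τ) ⟨hy, hτ⟩
  refine le_trans ?_ (hle x hx t ht)
  by_contra! hlt
  have ht₁_pos : 0 < t₁ := ht₁.1.lt_of_ne <| by rintro rfl; linarith [h_bottom x₁ hx₁]
  have hεt₁ := mul_pos hε ht₁_pos
  have hx₁_left : a < x₁ := hx₁.1.lt_of_ne <| by rintro rfl; linarith [h_left t₁ ht₁]
  have hx₁_right : x₁ < b := hx₁.2.lt_of_ne <| by rintro rfl; linarith [h_right t₁ ht₁]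
  have hx₁_mem : x₁ ∈ Ioo a b := ⟨hx₁_left, hx₁_right⟩
  have ht₁_mem : t₁ ∈ Ioc 0 T := ⟨ht₁_pos, ht₁.2⟩
  have hspace : IsLocalMin (fun y => v y t₁) x₁ := by
    filter_upwards [Icc_mem_nhds hx₁_left hx₁_right] with y hy
    linarith [hle y hy t₁ ht₁]
  have htime : deriv (v x₁) t₁ + ε ≤ 0 := by
    refine HasDerivAt.nonpos_of_isMinOn_Ioc ht₁_pos (g := fun τ => v x₁ τ + ε * τ) ?_ ?_
    · simpa using
        (hv_diff x₁ hx₁_mem t₁ ht₁_mem).hasDerivAt.fun_add ((hasDerivAt_id t₁).const_mul ε)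
    · exact isMinOn_iff.2 fun τ hτ => hle x₁ hx₁ τ ⟨hτ.1.le, hτ.2.trans ht₁.2⟩
  linarith [h_interior x₁ hx₁_mem t₁ ht₁_mem (by linarith) hspace]

lemma minimum_principle_rectangle (hm : m ≤ 0)
    (hv : ContinuousOn (fun p : ℝ × ℝ => v p.1 p.2) (Icc a b ×ˢ Icc 0 T))
    (h_bottom : ∀ x ∈ Icc a b, m ≤ v x 0) (h_left : ∀ t ∈ Icc 0 T, m ≤ v a t)
    (h_right : ∀ t ∈ Icc 0 T, m ≤ v b t)
    (hv_diff : ∀ x ∈ Ioo a b, ∀ t ∈ Ioc 0 T, DifferentiableAt ℝ (v x) t)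
    (h_interior : ∀ x ∈ Ioo a b, ∀ t ∈ Ioc 0 T, v x t < 0 →
      IsLocalMin (fun y => v y t) x → 0 ≤ deriv (v x) t) :
    ∀ x ∈ Icc a b, ∀ t ∈ Icc 0 T, m ≤ v x t := by
  intro x hx t ht
  have hlim : Tendsto (fun ε => v x t + ε * t) (𝓝[>] 0) (𝓝 (v x t)) :=
    tendsto_nhdsWithin_of_tendsto_nhds (Continuous.tendsto' (by fun_prop) 0 _ (by simp))
  refine ge_of_tendsto hlim (eventually_nhdsWithin_of_forall fun ε hε => ?_)
  exact minimum_principle_penalized hε hm hv h_bottom h_left h_right hv_diff h_interior x hx t ht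

lemma minimum_principle_halfStrip
    (hv : ContinuousOn (fun p : ℝ × ℝ => v p.1 p.2) (Ici a ×ˢ Icc 0 T))
    (h_bottom : ∀ x ≥ a, 0 ≤ v x 0) (h_left : ∀ t ∈ Icc 0 T, 0 ≤ v a t)
    (h_far : ∀ δ > 0, ∀ᶠ R in atTop, ∀ t ∈ Icc 0 T, -δ ≤ v R t)
    (hv_diff : ∀ x > a, ∀ t ∈ Ioc 0 T, DifferentiableAt ℝ (v x) t)
    (h_interior : ∀ x > a, ∀ t ∈ Ioc 0 T, v x t < 0 →
      IsLocalMin (fun y => v y t) x → 0 ≤ deriv (v x) t) :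
    ∀ x ≥ a, ∀ t ∈ Icc 0 T, 0 ≤ v x t := by
  intro x hx t ht
  refine le_of_forall_pos_le_add fun δ hδ => ?_
  obtain ⟨R, hR, hxR⟩ := ((h_far δ hδ).and (eventually_ge_atTop x)).exists
  have := minimum_principle_rectangle (neg_nonpos.2 hδ.le) (b := R)
    (hv.mono (prod_mono Icc_subset_Ici_self le_rfl))
    (fun y hy => (neg_nonpos.2 hδ.le).trans (h_bottom y hy.1))
    (fun τ hτ => (neg_nonpos.2 hδ.le).trans (h_left τ hτ)) hR
    (fun y hy => hv_diff y hy.1) (fun y hy => h_interior y hy.1) x ⟨hx, hxR⟩ t ht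
  linarith

end MinimumPrinciple

theorem stmt_4_general (lam t₀ : ℝ) (hlam : 0 < lam) (ht₀ : 0 < t₀)
    (u : ℝ → ℝ) (hureg : ContDiffOn ℝ 2 u (Set.Ici 0))
    (huode : ∀ x ≥ 0, (1 / 2) * iteratedDerivWithin 2 u (Set.Ici 0) x
      + (lam / 2) * (u x - 1) ^ 2 = 0)
    (hu0 : u 0 = 0)
    (hubd : ∀ x ≥ 0, 0 ≤ u x ∧ u x ≤ 1)
    (s : ℝ → ℝ → ℝ)
    (hsc : ContinuousOn (fun p : ℝ × ℝ => s p.1 p.2) (Set.Ici 0 ×ˢ Set.Icc 0 t₀))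
    (hsx : ∀ t ∈ Set.Ioo 0 t₀, ContDiffOn ℝ 2 (fun x => s x t) (Set.Ioi 0))
    (hst : ∀ x ∈ Set.Ioi (0 : ℝ), ContDiffOn ℝ 1 (fun t => s x t) (Set.Ioo 0 t₀))
    (hpde : ∀ x ∈ Set.Ioi (0 : ℝ), ∀ t ∈ Set.Ioo 0 t₀,
      deriv (fun τ => s x τ) t
        = (1 / 2) * deriv (deriv fun y => s y t) x + (lam / 2) * (s x t - 1) ^ 2)
    (hs0 : ∀ t ∈ Set.Icc 0 t₀, 0 ≤ s 0 t)
    (hinit : ∀ x ≥ 0, u x ≤ s x 0)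
    (hinf : Filter.Tendsto (fun x => ⨆ t : Set.Icc 0 t₀, |u x - s x t|)
      Filter.atTop (nhds 0)) :
    ∀ x ≥ 0, ∀ t ∈ Set.Icc 0 t₀, u x ≤ s x t := by
  have hslice : ∀ x ≥ 0, ContinuousOn (s x) (Icc 0 t₀) := fun x hx =>
    hsc.comp (Continuous.prodMk_right x).continuousOn fun _ ht => ⟨hx, ht⟩
  have hu'' : ∀ x > 0, deriv (deriv u) x = -lam * (u x - 1) ^ 2 := fun x hx => by
    linarith [iteratedDerivWithin_two_Ici hureg hx ▸ huode x hx.le]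
  have hbdd : ∀ R ≥ 0, BddAbove (range fun t : Icc 0 t₀ => |u R - s R t|) := fun R hR =>
    (isCompact_Icc.bddAbove_image (f := fun τ => |u R - s R τ|)
      (continuousOn_const.sub (hslice R hR)).abs).mono
      (range_subset_iff.2 fun t => mem_image_of_mem (fun τ => |u R - s R τ|) t.2)
  have hfar : ∀ δ > 0, ∀ᶠ R in atTop, ∀ t : Icc 0 t₀, u R - s R t ≤ δ := fun δ hδ =>
    eventually_forall_le_of_tendsto_iSup_abs ((eventually_ge_atTop 0).mono hbdd) hinf hδ
  intro x hx
  have hbefore : ∀ T ∈ Ico 0 t₀, u x ≤ s x T := fun T hT => by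
    have hTt₀ : Ioc 0 T ⊆ Ioo 0 t₀ := fun τ hτ => ⟨hτ.1, hτ.2.trans_lt hT.2⟩
    have hIcc : Icc 0 T ⊆ Icc 0 t₀ := Icc_subset_Icc_right hT.2.le
    refine sub_nonneg.1 <| minimum_principle_halfStrip (v := fun y τ => s y τ - u y)
      ((hsc.mono (prod_mono le_rfl hIcc)).sub (hureg.continuousOn.comp continuousOn_fst
        fun p hp => hp.1)) (fun y hy => sub_nonneg.2 (hinit y hy))
      (fun τ hτ => by simpa [hu0] using hs0 τ (hIcc hτ))
      (fun δ hδ => (hfar δ hδ).mono fun R hR τ hτ => by linarith [hR ⟨τ, hIcc hτ⟩])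
      (fun y hy τ hτ => ?_) (fun y hy τ hτ hneg hmin => ?_) x hx T ⟨hT.1, le_rfl⟩
    · exact (((hst y hy).contDiffAt (isOpen_Ioo.mem_nhds (hTt₀ hτ))).differentiableAt
        one_ne_zero).sub_const _
    · rw [deriv_sub_const, hpde y hy τ (hTt₀ hτ)]
      exact reaction_diffusion_rhs_nonneg_of_isLocalMin_sub hlam
        ((hsx τ (hTt₀ hτ)).contDiffAt (Ioi_mem_nhds hy)) (hureg.contDiffAt (Ici_mem_nhds hy))
        (hu'' y hy) (hubd y hy.le).2 (sub_neg.1 hneg) hmin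
  rw [← closure_Ico ht₀.ne]
  refine le_on_closure hbefore continuousOn_const ?_
  rw [closure_Ico ht₀.ne]
  exact hslice x hx

/-- Maximum-principle comparison: a stationary solution u is dominated by any
bounded solution s of the parabolic equation starting above it, nonnegative at
the spatial boundary, and agreeing with u at infinity uniformly in t. -/
theorem stmt_4 (lam t₀ : ℝ) (hlam : 0 < lam) (ht₀ : 0 < t₀)
    (u : ℝ → ℝ) (hureg : ContDiffOn ℝ 2 u (Set.Ici 0))
    (huode : ∀ x ≥ 0, (1 / 2) * iteratedDerivWithin 2 u (Set.Ici 0) x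
      + (lam / 2) * (u x - 1) ^ 2 = 0)
    (hu0 : u 0 = 0)
    (hubd : ∀ x ≥ 0, 0 ≤ u x ∧ u x ≤ 1)
    (s : ℝ → ℝ → ℝ)
    (hsc : ContinuousOn (fun p : ℝ × ℝ => s p.1 p.2) (Set.Ici 0 ×ˢ Set.Icc 0 t₀))
    (hsx : ∀ t ∈ Set.Ioo 0 t₀, ContDiffOn ℝ 2 (fun x => s x t) (Set.Ioi 0))
    (hst : ∀ x ∈ Set.Ioi (0 : ℝ), ContDiffOn ℝ 1 (fun t => s x t) (Set.Ioo 0 t₀))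
    (hpde : ∀ x ∈ Set.Ioi (0 : ℝ), ∀ t ∈ Set.Ioo 0 t₀,
      deriv (fun τ => s x τ) t
        = (1 / 2) * deriv (deriv fun y => s y t) x + (lam / 2) * (s x t - 1) ^ 2)
    (hsbd : ∀ x ≥ 0, ∀ t ∈ Set.Icc 0 t₀, 0 ≤ s x t ∧ s x t ≤ 1)
    (hs0 : ∀ t ∈ Set.Icc 0 t₀, 0 ≤ s 0 t)
    (hinit : ∀ x ≥ 0, u x ≤ s x 0)
    (hinf : Filter.Tendsto (fun x => ⨆ t : Set.Icc 0 t₀, |u x - s x t|)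
      Filter.atTop (nhds 0)) :
    ∀ x ≥ 0, ∀ t ∈ Set.Icc 0 t₀, u x ≤ s x t :=
  stmt_4_general lam t₀ hlam ht₀ u hureg huode hu0 hubd s hsc hsx hst hpde hs0 hinit hinf
end

section
/- Let λ > 0. If u : ℝ → ℝ is twice continuously differentiable on [0, ∞), satisfies (1/2)·u''(x) + (λ/2)·(u(x) − 1)² = 0 for all x ≥ 0, u(0) = 0, and u(x) ≥ 0 for all x ≥ 0, then for all x ≥ 0 one has u(x) ≥ 1 − 1/(√(λ/6)·x + 1)². -/
/-!
With `c = √(λ/6)`, the function `v x = 1 - 1/(c x + 1)^2` solves the same equation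
`v'' = -λ (v - 1)^2` with `v 0 = 0`. Wherever `u < v` we have `u < v < 1`, hence
`(u - 1)^2 ≥ (v - 1)^2` and `(u - v)'' ≤ 0`: the difference `w = u - v` is concave on every
interval where it is negative. If `w x₀ < 0`, let `s < x₀` be the last point before `x₀` with
`w s ≥ 0`. A return of `w` to `[0, ∞)` after `x₀` would put `w x₀` below a nonnegative chord, so
`w < 0` on `(s, ∞)`; then concavity makes `w` decrease at least linearly, contradicting
`w ≥ -1`, which holds because `u ≥ 0` and `v < 1`.
-/

open Set

section

variable {w : ℝ → ℝ} {s t x : ℝ}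

theorem ConcaveOn.secant_le (hw : ConcaveOn ℝ (Icc s t) w) (hsx : s < x) (hxt : x < t) :
    (t - x) * w s + (x - s) * w t ≤ (t - s) * w x := by
  have hst := (hsx.trans hxt).le
  have h := hw.slope_anti_adjacent (left_mem_Icc.2 hst) (right_mem_Icc.2 hst) hsx hxt
  rw [div_le_div_iff₀ (sub_pos.2 hxt) (sub_pos.2 hsx)] at h
  linear_combination h

theorem ContinuousOn.exists_last_nonneg (hw : ContinuousOn w (Icc s t)) (hst : s ≤ t)
    (hs : 0 ≤ w s) : ∃ r ∈ Icc s t, 0 ≤ w r ∧ ∀ x ∈ Ioc r t, w x < 0 := by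
  have hF : IsCompact (Icc s t ∩ w ⁻¹' Ici 0) := isCompact_Icc.of_isClosed_subset
    (hw.preimage_isClosed_of_isClosed isClosed_Icc isClosed_Ici) inter_subset_left
  obtain ⟨r, ⟨hr, hwr⟩, hmax⟩ := hF.exists_isGreatest ⟨s, left_mem_Icc.2 hst, hs⟩
  exact ⟨r, hr, hwr, fun x hx => not_le.1 fun hwx =>
    hx.1.not_ge (hmax ⟨⟨hr.1.trans hx.1.le, hx.2⟩, hwx⟩)⟩

theorem ContinuousOn.exists_first_nonneg (hw : ContinuousOn w (Icc s t)) (hst : s ≤ t)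
    (ht : 0 ≤ w t) : ∃ r ∈ Icc s t, 0 ≤ w r ∧ ∀ x ∈ Ico s r, w x < 0 := by
  have hF : IsCompact (Icc s t ∩ w ⁻¹' Ici 0) := isCompact_Icc.of_isClosed_subset
    (hw.preimage_isClosed_of_isClosed isClosed_Icc isClosed_Ici) inter_subset_left
  obtain ⟨r, ⟨hr, hwr⟩, hmin⟩ := hF.exists_isLeast ⟨t, right_mem_Icc.2 hst, ht⟩
  exact ⟨r, hr, hwr, fun x hx => not_le.1 fun hwx =>
    hx.2.not_ge (hmin ⟨⟨hx.1, hx.2.le.trans hr.2⟩, hwx⟩)⟩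

theorem nonneg_of_concaveOn_of_neg {w : ℝ → ℝ} {a m : ℝ} (hw : ContinuousOn w (Ici a))
    (ha : 0 ≤ w a) (hm : ∀ x ≥ a, m ≤ w x)
    (hconc : ∀ s t, a ≤ s → (∀ x ∈ Ioo s t, w x < 0) → ConcaveOn ℝ (Icc s t) w) :
    ∀ x ≥ a, 0 ≤ w x := by
  intro x₀ hx₀
  by_contra! hneg
  obtain ⟨s, hs, hws, hlast⟩ := (hw.mono Icc_subset_Ici_self).exists_last_nonneg hx₀ ha
  have hsx₀ : s < x₀ := hs.2.lt_of_ne (by rintro rfl; linarith)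
  have hstay : ∀ y > s, w y < 0 := by
    intro y hsy
    by_contra! hwy
    have hx₀y : x₀ < y := lt_of_not_ge fun hyx => (hlast y ⟨hsy, hyx⟩).not_ge hwy
    obtain ⟨t, ht, hwt, hfirst⟩ :=
      (hw.mono (Icc_subset_Ici_iff hx₀y.le |>.2 hx₀)).exists_first_nonneg hx₀y.le hwy
    have hx₀t : x₀ < t := ht.1.lt_of_ne (by rintro rfl; linarith)
    have hsec := (hconc s t hs.1 fun x hx => (le_or_gt x x₀).elim
      (fun h => hlast x ⟨hx.1, h⟩) (fun h => hfirst x ⟨h.le, hx.2⟩)).secant_le hsx₀ hx₀t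
    linarith [mul_nonneg (sub_nonneg.2 hx₀t.le) hws, mul_nonneg (sub_nonneg.2 hsx₀.le) hwt,
      mul_neg_of_pos_of_neg (sub_pos.2 (hsx₀.trans hx₀t)) hneg]
  have hm₀ : m < 0 := (hm x₀ hx₀).trans_lt hneg
  -- the chord from `(s, 0)` through `(x₀, w x₀)` lies below `m` at `t`
  set t := s + (x₀ - s) * (m / w x₀ + 1)
  have hx₀t : x₀ < t := by
    have : 0 < (x₀ - s) * (m / w x₀) := mul_pos (sub_pos.2 hsx₀) (div_pos_of_neg_of_neg hm₀ hneg)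
    linarith
  have hsec := (hconc s t hs.1 fun x hx => hstay x hx.1).secant_le hsx₀ hx₀t
  have ht : (t - s) * w x₀ = (x₀ - s) * (m + w x₀) := by
    simp only [t]; field_simp [hneg.ne]; ring
  linarith [mul_nonneg (sub_nonneg.2 hx₀t.le) hws,
    mul_le_mul_of_nonneg_left (hm t (hx₀.trans hx₀t.le)) (sub_nonneg.2 hsx₀.le),
    mul_neg_of_pos_of_neg (sub_pos.2 hsx₀) hneg]

end

section Affine

variable {c x : ℝ}

theorem hasDerivAt_one_sub_one_div_sq_affine (hx : c * x + 1 ≠ 0) :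
    HasDerivAt (fun y => 1 - 1 / (c * y + 1) ^ 2) (2 * c / (c * x + 1) ^ 3) x := by
  have h := ((((hasDerivAt_id x).const_mul c).add_const 1).pow 2).inv (pow_ne_zero 2 hx)
  simp only [Pi.pow_apply, id, ← one_div] at h
  exact (h.const_sub 1).congr_deriv (by field_simp; ring)

theorem hasDerivAt_two_mul_div_cube_affine (hx : c * x + 1 ≠ 0) :
    HasDerivAt (fun y => 2 * c / (c * y + 1) ^ 3) (-(6 * c ^ 2) / (c * x + 1) ^ 4) x := by
  have h := ((((hasDerivAt_id x).const_mul c).add_const 1).pow 3).inv (pow_ne_zero 3 hx)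
  simp only [Pi.pow_apply, id] at h
  simpa [div_eq_mul_inv] using (h.const_mul (2 * c)).congr_deriv (by field_simp; ring)

end Affine

theorem ContDiffOn.hasDerivAt_deriv_Ici {u : ℝ → ℝ} {a x : ℝ} (hu : ContDiffOn ℝ 2 u (Ici a))
    (hx : a < x) :
    HasDerivAt u (deriv u x) x ∧ HasDerivAt (deriv u) (iteratedDerivWithin 2 u (Ici a) x) x := by
  have hu' : ContDiffOn ℝ 2 u (Ioi a) := hu.mono Ioi_subset_Ici_self
  have hd : ContDiffOn ℝ 1 (deriv u) (Ioi a) := hu'.deriv_of_isOpen isOpen_Ioi (by norm_num)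
  rw [iteratedDerivWithin_eq_iteratedDeriv (uniqueDiffOn_Ici a)
    (hu.contDiffAt (Ici_mem_nhds hx)) hx.le, iteratedDeriv_succ, iteratedDeriv_one]
  exact ⟨(hu'.differentiableOn (by norm_num) x hx).differentiableAt (Ioi_mem_nhds hx) |>.hasDerivAt,
    (hd.differentiableOn (by norm_num) x hx).differentiableAt (Ioi_mem_nhds hx) |>.hasDerivAt⟩

theorem concaveOn_sub_of_solutions_of_le {lam s t : ℝ} {u v u' v' : ℝ → ℝ} (hlam : 0 ≤ lam)
    (hu : ContinuousOn u (Icc s t)) (hv : ContinuousOn v (Icc s t))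
    (hu' : ∀ x ∈ Ioo s t, HasDerivAt u (u' x) x)
    (hu'' : ∀ x ∈ Ioo s t, HasDerivAt u' (-lam * (u x - 1) ^ 2) x)
    (hv' : ∀ x ∈ Ioo s t, HasDerivAt v (v' x) x)
    (hv'' : ∀ x ∈ Ioo s t, HasDerivAt v' (-lam * (v x - 1) ^ 2) x)
    (huv : ∀ x ∈ Ioo s t, u x ≤ v x ∧ v x ≤ 1) :
    ConcaveOn ℝ (Icc s t) (fun x => u x - v x) := by
  refine concaveOn_of_hasDerivWithinAt2_nonpos (convex_Icc s t) (hu.sub hv)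
    (f' := fun x => u' x - v' x) (f'' := fun x => -lam * (u x - 1) ^ 2 - -lam * (v x - 1) ^ 2)
    ?_ ?_ ?_ <;> rw [interior_Icc] <;> intro x hx
  · exact ((hu' x hx).sub (hv' x hx)).hasDerivWithinAt
  · exact ((hu'' x hx).sub (hv'' x hx)).hasDerivWithinAt
  · obtain ⟨huv, hv1⟩ := huv x hx
    linarith [mul_nonneg hlam (mul_nonneg (sub_nonneg.2 huv) (by linarith : 0 ≤ 2 - u x - v x))]

/-- The explicit solution 1 − 1/(√(λ/6)·x + 1)² is the least nonnegative
solution: any nonnegative C² solution of the stationary equation with u(0) = 0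
dominates it. -/
theorem stmt_5 (lam : ℝ) (hlam : 0 < lam) (u : ℝ → ℝ)
    (hreg : ContDiffOn ℝ 2 u (Set.Ici 0))
    (hode : ∀ x ≥ 0, (1 / 2) * iteratedDerivWithin 2 u (Set.Ici 0) x
      + (lam / 2) * (u x - 1) ^ 2 = 0)
    (h0 : u 0 = 0)
    (hnn : ∀ x ≥ 0, 0 ≤ u x) :
    ∀ x ≥ 0, 1 - 1 / (Real.sqrt (lam / 6) * x + 1) ^ 2 ≤ u x := by
  set c := Real.sqrt (lam / 6)
  have hc : 6 * c ^ 2 = lam := by rw [Real.sq_sqrt (by positivity)]; ring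
  have hpos : ∀ x ≥ 0, 0 < c * x + 1 := fun x hx => by positivity
  set v : ℝ → ℝ := fun x => 1 - 1 / (c * x + 1) ^ 2
  have hv_lt : ∀ x ≥ 0, v x < 1 := fun x hx =>
    sub_lt_self 1 (one_div_pos.2 (pow_pos (hpos x hx) 2))
  have hv : ContinuousOn v (Ici 0) := fun x hx =>
    (hasDerivAt_one_sub_one_div_sq_affine (hpos x hx).ne').continuousAt.continuousWithinAt
  have hv'' : ∀ x > 0, HasDerivAt (fun y => 2 * c / (c * y + 1) ^ 3) (-lam * (v x - 1) ^ 2) x := by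
    intro x hx
    convert hasDerivAt_two_mul_div_cube_affine (hpos x hx.le).ne' using 1
    simp only [v, ← hc]; field_simp [(hpos x hx.le).ne']; ring
  have hu'' : ∀ x > 0, HasDerivAt (deriv u) (-lam * (u x - 1) ^ 2) x := fun x hx =>
    (hreg.hasDerivAt_deriv_Ici hx).2.congr_deriv (by linarith [hode x hx.le])
  have hconc : ∀ s t, 0 ≤ s → (∀ x ∈ Ioo s t, u x - v x < 0) →
      ConcaveOn ℝ (Icc s t) fun x => u x - v x := by
    intro s t hs hneg
    have hsub : Icc s t ⊆ Ici 0 := fun x hx => hs.trans hx.1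
    have hpos' : ∀ x ∈ Ioo s t, 0 < x := fun x hx => hs.trans_lt hx.1
    exact concaveOn_sub_of_solutions_of_le hlam.le (hreg.continuousOn.mono hsub) (hv.mono hsub)
      (fun x hx => (hreg.hasDerivAt_deriv_Ici (hpos' x hx)).1) (fun x hx => hu'' x (hpos' x hx))
      (fun x hx => hasDerivAt_one_sub_one_div_sq_affine (hpos x (hpos' x hx).le).ne')
      (fun x hx => hv'' x (hpos' x hx))
      fun x hx => ⟨sub_nonpos.1 (hneg x hx).le, (hv_lt x (hpos' x hx).le).le⟩
  have hbdd : ∀ x ≥ 0, -1 ≤ u x - v x := fun x hx => by linarith [hnn x hx, hv_lt x hx]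
  have hw := nonneg_of_concaveOn_of_neg (hreg.continuousOn.sub hv) (by simp [v, h0]) hbdd hconc
  exact fun x hx => sub_nonneg.1 (hw x hx)
end

section
/- Let λ > 0 and let G be a polynomial with non-negative real coefficients such that G(1) = 1 (the coefficients sum to 1) and G'(1) ≤ 1 (the critical or sub-critical case). If u₁, u₂ : ℝ → ℝ are both twice continuously differentiable on [0, ∞), both satisfy (1/2)·u''(x) + λ·(G(u(x)) − u(x)) = 0 for all x ≥ 0, both satisfy u(0) = 0, and both satisfy 0 ≤ u(x) ≤ 1 for all x ≥ 0, then u₁(x) = u₂(x) for all x ≥ 0. -/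
/-!
Let `w = u₁ - u₂`. Wherever `u₁ ≥ u₂`, the equations give `½ w'' = λ (w - (G(u₁) - G(u₂))) ≥ 0`,
because on `[0, 1]` the slope of `G` is at most `G'(1) ≤ 1`; so `w` is convex on every interval
where it is nonnegative. If `w` became positive after its last nonpositive point `a ≥ 0`, convexity
would keep it above a line of positive slope through `a` from then on, so `w` could never return
to `0` and would be unbounded, contradicting `w ≤ 1`. By symmetry `u₁ = u₂`.
-/

open Set Polynomial

namespace Polynomial

theorem eval_monotoneOn_of_coeff_nonneg {P : ℝ[X]} (hP : ∀ n, 0 ≤ P.coeff n) :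
    MonotoneOn (fun x => P.eval x) (Ici 0) := fun s hs t _ hst => by
  simp only [eval_eq_sum_range]
  exact Finset.sum_le_sum fun i _ => mul_le_mul_of_nonneg_left (pow_le_pow_left₀ hs hst i) (hP i)

theorem coeff_derivative_nonneg {P : ℝ[X]} (hP : ∀ n, 0 ≤ P.coeff n) (n : ℕ) :
    0 ≤ P.derivative.coeff n := by
  rw [coeff_derivative]
  exact mul_nonneg (hP _) (by positivity)

theorem eval_sub_eval_le_derivative_mul {P : ℝ[X]} (hP : ∀ n, 0 ≤ P.coeff n) {s t : ℝ}
    (hs : 0 ≤ s) (hst : s ≤ t) : P.eval t - P.eval s ≤ P.derivative.eval t * (t - s) := by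
  rcases hst.eq_or_lt with rfl | hst
  · simp
  obtain ⟨c, hc, hslope⟩ := exists_hasDerivAt_eq_slope (fun x => P.eval x)
    (fun x => P.derivative.eval x) hst P.continuous.continuousOn fun x _ => P.hasDerivAt x
  have hc_le : P.derivative.eval c ≤ P.derivative.eval t :=
    eval_monotoneOn_of_coeff_nonneg (coeff_derivative_nonneg hP) (hs.trans hc.1.le)
      (hs.trans hst.le) hc.2.le
  rwa [hslope, div_le_iff₀ (sub_pos.mpr hst)] at hc_le

theorem eval_sub_eval_le_sub {P : ℝ[X]} (hP : ∀ n, 0 ≤ P.coeff n)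
    (hP' : P.derivative.eval 1 ≤ 1) {s t : ℝ} (hs : 0 ≤ s) (hst : s ≤ t) (ht : t ≤ 1) :
    P.eval t - P.eval s ≤ t - s := by
  calc P.eval t - P.eval s ≤ P.derivative.eval t * (t - s) :=
        eval_sub_eval_le_derivative_mul hP hs hst
    _ ≤ 1 * (t - s) := by
        gcongr
        exact (eval_monotoneOn_of_coeff_nonneg (coeff_derivative_nonneg hP) (hs.trans hst)
          (mem_Ici.mpr zero_le_one) ht).trans hP'
    _ = t - s := one_mul _

end Polynomial

theorem convexOn_Icc_of_iteratedDerivWithin_two_nonneg {f : ℝ → ℝ} {s : Set ℝ} {a b : ℝ}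
    (hf : ContDiffOn ℝ 2 f s) (hs : UniqueDiffOn ℝ s) (hab : Icc a b ⊆ s)
    (hf'' : ∀ x ∈ Ioo a b, 0 ≤ iteratedDerivWithin 2 f s x) : ConvexOn ℝ (Icc a b) f := by
  have hIoo : ContDiffOn ℝ 2 f (Ioo a b) := hf.mono (Ioo_subset_Icc_self.trans hab)
  refine convexOn_of_deriv2_nonneg (convex_Icc a b) (hf.continuousOn.mono hab) ?_ ?_ ?_ <;>
    rw [interior_Icc]
  · exact hIoo.differentiableOn two_ne_zero
  · exact (hIoo.deriv_of_isOpen isOpen_Ioo (by norm_num)).differentiableOn one_ne_zero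
  · intro x hx
    rw [← iteratedDeriv_eq_iterate, ← iteratedDerivWithin_eq_iteratedDeriv hs
      (hIoo.contDiffAt (isOpen_Ioo.mem_nhds hx)) (hab (Ioo_subset_Icc_self hx))]
    exact hf'' x hx

theorem exists_last_nonpos {f : ℝ → ℝ} {s t : ℝ} (hst : s ≤ t) (hf : ContinuousOn f (Icc s t))
    (hs : f s ≤ 0) : ∃ a ∈ Icc s t, f a ≤ 0 ∧ ∀ y ∈ Ioc a t, 0 < f y := by
  obtain ⟨a, ⟨ha, hfa⟩, hmax⟩ := (isCompact_Icc.of_isClosed_subset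
    (hf.preimage_isClosed_of_isClosed isClosed_Icc isClosed_Iic)
    inter_subset_left).exists_isGreatest ⟨s, ⟨le_rfl, hst⟩, hs⟩
  refine ⟨a, ha, hfa, fun y hy => lt_of_not_ge fun hfy => ?_⟩
  exact hy.1.not_ge (hmax ⟨⟨ha.1.trans hy.1.le, hy.2⟩, hfy⟩)

theorem exists_first_nonpos {f : ℝ → ℝ} {s t : ℝ} (hst : s ≤ t) (hf : ContinuousOn f (Icc s t))
    (ht : f t ≤ 0) : ∃ b ∈ Icc s t, f b ≤ 0 ∧ ∀ y ∈ Ico s b, 0 < f y := by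
  obtain ⟨b, ⟨hb, hfb⟩, hmin⟩ := (isCompact_Icc.of_isClosed_subset
    (hf.preimage_isClosed_of_isClosed isClosed_Icc isClosed_Iic)
    inter_subset_left).exists_isLeast ⟨t, ⟨hst, le_rfl⟩, ht⟩
  refine ⟨b, hb, hfb, fun y hy => lt_of_not_ge fun hfy => ?_⟩
  exact hy.2.not_ge (hmin ⟨⟨hy.1, hy.2.le.trans hb.2⟩, hfy⟩)

theorem nonpos_of_convexOn_where_nonneg {f : ℝ → ℝ} {M : ℝ} (hf : ContinuousOn f (Ici 0))
    (hconv : ∀ a b, 0 ≤ a → (∀ x ∈ Ioo a b, 0 ≤ f x) → ConvexOn ℝ (Icc a b) f)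
    (hM : ∀ x ≥ 0, f x ≤ M) (h0 : f 0 ≤ 0) : ∀ x ≥ 0, f x ≤ 0 := by
  intro x₀ hx₀
  by_contra! hfx₀
  obtain ⟨a, ⟨ha, hax₀⟩, hfa, hpos_left⟩ :=
    exists_last_nonpos hx₀ (hf.mono Icc_subset_Ici_self) h0
  have hax₀ : a < x₀ := hax₀.lt_of_ne (by rintro rfl; linarith)
  set m := (f x₀ - f a) / (x₀ - a)
  have hm : 0 < m := div_pos (by linarith) (by linarith)
  have hgrow : ∀ b > x₀, (∀ x ∈ Ioo a b, 0 ≤ f x) → f x₀ + m * (b - x₀) ≤ f b := by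
    intro b hb hnn
    have hslope := (hconv a b ha hnn).slope_mono_adjacent (left_mem_Icc.mpr (hax₀.trans hb).le)
      (right_mem_Icc.mpr (hax₀.trans hb).le) hax₀ hb
    rw [le_div_iff₀ (sub_pos.mpr hb)] at hslope
    linarith
  have hpos : ∀ y > a, 0 < f y := by
    intro y hy
    by_contra! hfy
    have hx₀y : x₀ < y := lt_of_not_ge fun h => (hpos_left y ⟨hy, h⟩).not_ge hfy
    obtain ⟨b, ⟨hx₀b, -⟩, hfb, hpos_right⟩ :=
      exists_first_nonpos hx₀y.le (hf.mono fun z hz => hx₀.trans hz.1) hfy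
    have hx₀b : x₀ < b := hx₀b.lt_of_ne (by rintro rfl; linarith)
    have hfb_pos := hgrow b hx₀b fun x hx => by
      rcases le_or_gt x x₀ with h | h
      exacts [(hpos_left x ⟨hx.1, h⟩).le, (hpos_right x ⟨h.le, hx.2⟩).le]
    linarith [mul_pos hm (sub_pos.mpr hx₀b)]
  have hM_pos : 0 < M := hfx₀.trans_le (hM x₀ hx₀)
  have hb : x₀ < x₀ + M / m := by linarith [div_pos hM_pos hm]
  have hfb := hgrow _ hb fun x hx => (hpos x hx.1).le
  rw [add_sub_cancel_left, mul_div_cancel₀ _ hm.ne'] at hfb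
  linarith [hM _ (hx₀.trans hb.le)]

def IsStationarySolution (lam : ℝ) (G : ℝ[X]) (u : ℝ → ℝ) : Prop :=
  ContDiffOn ℝ 2 u (Ici 0) ∧
    ∀ x ≥ 0, (1 / 2) * iteratedDerivWithin 2 u (Ici 0) x + lam * (G.eval (u x) - u x) = 0

theorem IsStationarySolution.le_of_le_at_zero {lam : ℝ} {G : ℝ[X]} {u₁ u₂ : ℝ → ℝ}
    (hlam : 0 ≤ lam) (hG : ∀ n, 0 ≤ G.coeff n) (hG' : G.derivative.eval 1 ≤ 1)
    (h₁ : IsStationarySolution lam G u₁) (h₂ : IsStationarySolution lam G u₂)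
    (h0 : u₁ 0 ≤ u₂ 0) (hu₁ : ∀ x ≥ 0, u₁ x ≤ 1) (hu₂ : ∀ x ≥ 0, 0 ≤ u₂ x) :
    ∀ x ≥ 0, u₁ x ≤ u₂ x := by
  have hw'' : ∀ x ≥ 0, u₂ x ≤ u₁ x → 0 ≤ iteratedDerivWithin 2 (u₁ - u₂) (Ici 0) x := by
    intro x hx hle
    rw [iteratedDerivWithin_sub (mem_Ici.mpr hx) (uniqueDiffOn_Ici 0) (h₁.1 x hx) (h₂.1 x hx)]
    have hG_lip := Polynomial.eval_sub_eval_le_sub hG hG' (hu₂ x hx) hle (hu₁ x hx)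
    have := h₁.2 x hx
    have := h₂.2 x hx
    linarith [mul_nonneg hlam (sub_nonneg.mpr hG_lip)]
  have hconv : ∀ a b, 0 ≤ a → (∀ x ∈ Ioo a b, 0 ≤ (u₁ - u₂) x) →
      ConvexOn ℝ (Icc a b) (u₁ - u₂) := fun a b ha hnn =>
    convexOn_Icc_of_iteratedDerivWithin_two_nonneg (h₁.1.sub h₂.1) (uniqueDiffOn_Ici 0)
      (fun x hx => ha.trans hx.1) fun x hx =>
        hw'' x (ha.trans hx.1.le) (sub_nonneg.mp (hnn x hx))
  intro x hx
  refine sub_nonpos.mp (nonpos_of_convexOn_where_nonneg (M := 1) (h₁.1.sub h₂.1).continuousOn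
    hconv (fun x hx => ?_) (sub_nonpos.mpr h0) x hx)
  linarith [hu₁ x hx, hu₂ x hx]

theorem stmt_6_general (lam : ℝ) (hlam : 0 < lam) (G : Polynomial ℝ)
    (hGnn : ∀ n, 0 ≤ G.coeff n)
    (hG'1 : G.derivative.eval 1 ≤ 1)
    (u₁ u₂ : ℝ → ℝ)
    (hreg₁ : ContDiffOn ℝ 2 u₁ (Set.Ici 0))
    (hreg₂ : ContDiffOn ℝ 2 u₂ (Set.Ici 0))
    (hode₁ : ∀ x ≥ 0, (1 / 2) * iteratedDerivWithin 2 u₁ (Set.Ici 0) x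
      + lam * (G.eval (u₁ x) - u₁ x) = 0)
    (hode₂ : ∀ x ≥ 0, (1 / 2) * iteratedDerivWithin 2 u₂ (Set.Ici 0) x
      + lam * (G.eval (u₂ x) - u₂ x) = 0)
    (h0₁ : u₁ 0 = 0) (h0₂ : u₂ 0 = 0)
    (hbd₁ : ∀ x ≥ 0, 0 ≤ u₁ x ∧ u₁ x ≤ 1)
    (hbd₂ : ∀ x ≥ 0, 0 ≤ u₂ x ∧ u₂ x ≤ 1) :
    ∀ x ≥ 0, u₁ x = u₂ x := by
  have h₁ : IsStationarySolution lam G u₁ := ⟨hreg₁, hode₁⟩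
  have h₂ : IsStationarySolution lam G u₂ := ⟨hreg₂, hode₂⟩
  intro x hx
  exact le_antisymm
    (h₁.le_of_le_at_zero hlam.le hGnn hG'1 h₂ (h0₁.trans h0₂.symm).le
      (fun y hy => (hbd₁ y hy).2) (fun y hy => (hbd₂ y hy).1) x hx)
    (h₂.le_of_le_at_zero hlam.le hGnn hG'1 h₁ (h0₂.trans h0₁.symm).le
      (fun y hy => (hbd₂ y hy).2) (fun y hy => (hbd₁ y hy).1) x hx)

/-- Uniqueness for the stationary probabilistic polynomial equation in the
critical and sub-critical cases: two C² solutions with values in [0,1] and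
zero boundary value coincide on [0,∞). -/
theorem stmt_6 (lam : ℝ) (hlam : 0 < lam) (G : Polynomial ℝ)
    (hGnn : ∀ n, 0 ≤ G.coeff n)
    (hG1 : G.eval 1 = 1)
    (hG'1 : G.derivative.eval 1 ≤ 1)
    (u₁ u₂ : ℝ → ℝ)
    (hreg₁ : ContDiffOn ℝ 2 u₁ (Set.Ici 0))
    (hreg₂ : ContDiffOn ℝ 2 u₂ (Set.Ici 0))
    (hode₁ : ∀ x ≥ 0, (1 / 2) * iteratedDerivWithin 2 u₁ (Set.Ici 0) x
      + lam * (G.eval (u₁ x) - u₁ x) = 0)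
    (hode₂ : ∀ x ≥ 0, (1 / 2) * iteratedDerivWithin 2 u₂ (Set.Ici 0) x
      + lam * (G.eval (u₂ x) - u₂ x) = 0)
    (h0₁ : u₁ 0 = 0) (h0₂ : u₂ 0 = 0)
    (hbd₁ : ∀ x ≥ 0, 0 ≤ u₁ x ∧ u₁ x ≤ 1)
    (hbd₂ : ∀ x ≥ 0, 0 ≤ u₂ x ∧ u₂ x ≤ 1) :
    ∀ x ≥ 0, u₁ x = u₂ x :=
  stmt_6_general lam hlam G hGnn hG'1 u₁ u₂ hreg₁ hreg₂ hode₁ hode₂ h0₁ h0₂ hbd₁ hbd₂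
end

section
/- Let λ > 0, let t₀ > 0, and let G be a polynomial with non-negative real coefficients such that G(1) = 1. Suppose u : ℝ → ℝ is twice continuously differentiable on [0, ∞), satisfies (1/2)·u''(x) + λ·(G(u(x)) − u(x)) = 0 for all x ≥ 0, u(0) = 0, and 0 ≤ u(x) ≤ 1 for all x ≥ 0. Suppose w : [0, ∞) × [0, t₀] → ℝ is continuous, is twice continuously differentiable in x and once in t on the interior, satisfies the parabolic equation ∂w/∂t = (1/2)·∂²w/∂x² + λ·(G(w) − w) there, satisfies 0 ≤ w(x, t) ≤ 1 for all (x, t), satisfies w(0, t) ≤ 0 for all t ∈ [0, t₀], satisfies w(x, 0) ≤ u(x) for all x ≥ 0, and satisfies sup_{t ∈ [0, t₀]} |u(x) − w(x, t)| → 0 as x → ∞. Then w(x, t) ≤ u(x) for all x ≥ 0 and t ∈ [0, t₀]. -/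
/-!
With `k = λ G'(1)`, consider `ψ(x, t) = e^{-kt} (w(x, t) - u(x))` on a rectangle
`[0, R] × [0, t₁]` with `t₁ < t₀`. Nonnegative coefficients make `G'` increasing on `[0, 1]`,
so `G(b) - G(a) ≤ G'(1) (b - a)` for `0 ≤ a ≤ b ≤ 1`. At a maximum of `ψ` with `w > u` away
from the parabolic boundary, `∂ₓ²(w - u) ≤ 0` and `∂ₜψ ≥ 0`, and the two equations give
`k (w - u) ≤ ∂ₜw ≤ (k - λ) (w - u)`, which is impossible. Hence the maximum of `ψ` is at most
its value on the parabolic boundary: nonpositive at `x = 0` and `t = 0`, and below any `ε > 0`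
at `x = R` once `R` is large. Letting `ε → 0` gives `w ≤ u` for `t < t₀`, and continuity in `t`
reaches `t = t₀`.
-/

open Set Filter Topology Real

namespace Polynomial

variable {G : Polynomial ℝ}

theorem coeff_derivative_nonneg_s7 (hG : ∀ n, 0 ≤ G.coeff n) (n : ℕ) :
    0 ≤ G.derivative.coeff n := by
  rw [coeff_derivative]
  exact mul_nonneg (hG (n + 1)) (by positivity)

theorem eval_nonneg_of_coeff_nonneg (hG : ∀ n, 0 ≤ G.coeff n) {x : ℝ} (hx : 0 ≤ x) :
    0 ≤ G.eval x := by
  rw [eval_eq_sum_range]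
  exact Finset.sum_nonneg fun i _ => mul_nonneg (hG i) (pow_nonneg hx i)

theorem monotoneOn_eval_of_coeff_nonneg (hG : ∀ n, 0 ≤ G.coeff n) :
    MonotoneOn (fun x => G.eval x) (Ici 0) := by
  intro a ha b _ hab
  simp only [eval_eq_sum_range]
  exact Finset.sum_le_sum fun i _ =>
    mul_le_mul_of_nonneg_left (pow_le_pow_left₀ ha hab i) (hG i)

theorem eval_sub_eval_le_of_coeff_nonneg (hG : ∀ n, 0 ≤ G.coeff n) {a b c : ℝ}
    (ha : 0 ≤ a) (hab : a ≤ b) (hbc : b ≤ c) :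
    G.eval b - G.eval a ≤ G.derivative.eval c * (b - a) :=
  (convex_Icc a c).image_sub_le_mul_sub_of_deriv_le G.continuous.continuousOn
    G.differentiable.differentiableOn
    (fun x hx => by
      rw [interior_Icc] at hx
      rw [Polynomial.deriv]
      exact monotoneOn_eval_of_coeff_nonneg (coeff_derivative_nonneg_s7 hG)
        (ha.trans hx.1.le) (ha.trans (hx.1.trans hx.2).le) hx.2.le)
    a (left_mem_Icc.2 (hab.trans hbc)) b ⟨hab, hbc⟩ hab

end Polynomial

theorem deriv_deriv_nonpos_of_isLocalMax {f : ℝ → ℝ} {x : ℝ} (hmax : IsLocalMax f x)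
    (hf : ContinuousAt f x) : deriv (deriv f) x ≤ 0 := by
  by_contra! hpos
  -- by the second-derivative test `x` is also a local minimum, so `f` is locally constant
  have hmin : IsLocalMin f x := isLocalMin_of_deriv_deriv_pos hpos hmax.deriv_eq_zero hf
  have hconst : f =ᶠ[𝓝 x] fun _ => f x :=
    (hmax.and hmin).mono fun y hy => le_antisymm hy.1 hy.2
  have hderiv : deriv f =ᶠ[𝓝 x] fun _ => 0 := by
    simpa using hconst.deriv
  simp [hderiv.deriv_eq] at hpos

theorem deriv_deriv_le_of_isLocalMax_sub {f g : ℝ → ℝ} {x : ℝ} (hf : ContDiffAt ℝ 2 f x)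
    (hg : ContDiffAt ℝ 2 g x) (hmax : IsLocalMax (fun y => f y - g y) x) :
    deriv (deriv f) x ≤ deriv (deriv g) x := by
  have hsub : deriv (fun y => f y - g y) =ᶠ[𝓝 x] fun y => deriv f y - deriv g y := by
    filter_upwards [hf.eventually (by simp), hg.eventually (by simp)] with y hfy hgy
    exact deriv_sub (hfy.differentiableAt (by simp)) (hgy.differentiableAt (by simp))
  have h := deriv_deriv_nonpos_of_isLocalMax hmax (hf.continuousAt.sub hg.continuousAt)
  have hf' := (hf.derivWithin (m := 1) (by norm_num)).differentiableAt one_ne_zero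
  have hg' := (hg.derivWithin (m := 1) (by norm_num)).differentiableAt one_ne_zero
  rw [hsub.deriv_eq, deriv_fun_sub hf' hg'] at h
  linarith

theorem IsMaxOn.hasDerivAt_nonneg {f : ℝ → ℝ} {f' c t : ℝ} (hmax : IsMaxOn f (Icc c t) t)
    (hct : c < t) (hf : HasDerivAt f f' t) : 0 ≤ f' := by
  have hcone : c - t ∈ posTangentConeAt (Icc c t) t :=
    sub_mem_posTangentConeAt_of_segment_subset (by rw [segment_symm, segment_eq_Icc hct.le])
  have h := hmax.localize.hasFDerivWithinAt_nonpos hf.hasFDerivAt.hasFDerivWithinAt hcone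
  rw [ContinuousLinearMap.toSpanSingleton_apply, smul_eq_mul] at h
  nlinarith

theorem mul_sub_le_deriv_of_isMaxOn_exp_mul {f : ℝ → ℝ} {a c k t : ℝ} (hct : c < t)
    (hf : DifferentiableAt ℝ f t)
    (hmax : IsMaxOn (fun s => exp (-(k * s)) * (f s - a)) (Icc c t) t) :
    k * (f t - a) ≤ deriv f t := by
  have hweight : HasDerivAt (fun s => exp (-(k * s))) (-k * exp (-(k * t))) t := by
    simpa [mul_comm] using ((hasDerivAt_id t).const_mul k).neg.exp
  have hderiv := hweight.mul (hf.hasDerivAt.sub_const a)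
  have h := hmax.hasDerivAt_nonneg hct hderiv
  have hexp := exp_pos (-(k * t))
  nlinarith

theorem le_of_comparison_at_max {lam a b wt wxx uxx : ℝ} {G : Polynomial ℝ} (hlam : 0 < lam)
    (hG : ∀ n, 0 ≤ G.coeff n) (ha : 0 ≤ a) (hb : b ≤ 1)
    (hpde : wt = 1 / 2 * wxx + lam * (G.eval b - b))
    (hode : 1 / 2 * uxx + lam * (G.eval a - a) = 0)
    (hxx : wxx ≤ uxx) (hwt : lam * G.derivative.eval 1 * (b - a) ≤ wt) : b ≤ a := by
  by_contra! hab
  have hlip := mul_le_mul_of_nonneg_left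
    (G.eval_sub_eval_le_of_coeff_nonneg hG ha hab.le hb) hlam.le
  nlinarith [mul_pos hlam (sub_pos.2 hab)]

theorem le_of_isLocalMax_of_isMaxOn_exp_mul {lam c x t : ℝ} {G : Polynomial ℝ} {u : ℝ → ℝ}
    {w : ℝ → ℝ → ℝ} (hlam : 0 < lam) (hG : ∀ n, 0 ≤ G.coeff n)
    (hu : ContDiffAt ℝ 2 u x) (hw : ContDiffAt ℝ 2 (fun y => w y t) x)
    (hwt : DifferentiableAt ℝ (fun s => w x s) t)
    (hode : 1 / 2 * deriv (deriv u) x + lam * (G.eval (u x) - u x) = 0)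
    (hpde : deriv (fun s => w x s) t
      = 1 / 2 * deriv (deriv fun y => w y t) x + lam * (G.eval (w x t) - w x t))
    (hu_nonneg : 0 ≤ u x) (hw_le_one : w x t ≤ 1)
    (hspace : IsLocalMax (fun y => w y t - u y) x) (hct : c < t)
    (htime : IsMaxOn (fun s => exp (-(lam * G.derivative.eval 1 * s)) * (w x s - u x))
      (Icc c t) t) :
    w x t ≤ u x :=
  le_of_comparison_at_max hlam hG hu_nonneg hw_le_one hpde hode
    (deriv_deriv_le_of_isLocalMax_sub hw hu hspace)
    (mul_sub_le_deriv_of_isMaxOn_exp_mul hct hwt htime)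

structure IsStationarySolution_s7 (lam : ℝ) (G : Polynomial ℝ) (u : ℝ → ℝ) : Prop where
  contDiffOn : ContDiffOn ℝ 2 u (Ici 0)
  ode : ∀ x ≥ 0, (1 / 2) * iteratedDerivWithin 2 u (Ici 0) x + lam * (G.eval (u x) - u x) = 0

structure IsParabolicSolution (lam t₀ : ℝ) (G : Polynomial ℝ) (w : ℝ → ℝ → ℝ) : Prop where
  continuousOn : ContinuousOn (fun p : ℝ × ℝ => w p.1 p.2) (Ici 0 ×ˢ Icc 0 t₀)
  contDiffOn_space : ∀ t ∈ Ioo 0 t₀, ContDiffOn ℝ 2 (fun x => w x t) (Ioi 0)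
  contDiffOn_time : ∀ x ∈ Ioi (0 : ℝ), ContDiffOn ℝ 1 (fun t => w x t) (Ioo 0 t₀)
  pde : ∀ x ∈ Ioi (0 : ℝ), ∀ t ∈ Ioo 0 t₀,
    deriv (fun s => w x s) t
      = (1 / 2) * deriv (deriv fun y => w y t) x + lam * (G.eval (w x t) - w x t)

namespace IsStationarySolution_s7

variable {lam : ℝ} {G : Polynomial ℝ} {u : ℝ → ℝ} {x : ℝ}

theorem contDiffAt (hu : IsStationarySolution_s7 lam G u) (hx : 0 < x) : ContDiffAt ℝ 2 u x :=
  hu.contDiffOn.contDiffAt (Ici_mem_nhds hx)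

theorem ode_deriv (hu : IsStationarySolution_s7 lam G u) (hx : 0 < x) :
    1 / 2 * deriv (deriv u) x + lam * (G.eval (u x) - u x) = 0 := by
  have h := hu.ode x hx.le
  rwa [iteratedDerivWithin_eq_iteratedDeriv (uniqueDiffOn_Ici 0) (hu.contDiffAt hx) hx.le,
    iteratedDeriv_eq_iterate, Function.iterate_succ_apply, Function.iterate_one] at h

end IsStationarySolution_s7

namespace IsParabolicSolution

variable {lam t₀ : ℝ} {G : Polynomial ℝ} {w : ℝ → ℝ → ℝ} {x t : ℝ}

theorem contDiffAt_space (hw : IsParabolicSolution lam t₀ G w) (hx : 0 < x) (ht : t ∈ Ioo 0 t₀) :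
    ContDiffAt ℝ 2 (fun y => w y t) x :=
  (hw.contDiffOn_space t ht).contDiffAt (Ioi_mem_nhds hx)

theorem differentiableAt_time (hw : IsParabolicSolution lam t₀ G w) (hx : 0 < x)
    (ht : t ∈ Ioo 0 t₀) : DifferentiableAt ℝ (fun s => w x s) t :=
  ((hw.contDiffOn_time x hx).contDiffAt (Ioo_mem_nhds ht.1 ht.2)).differentiableAt one_ne_zero

end IsParabolicSolution

noncomputable def weightedGap (k : ℝ) (u : ℝ → ℝ) (w : ℝ → ℝ → ℝ) (p : ℝ × ℝ) : ℝ :=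
  exp (-(k * p.2)) * (w p.1 p.2 - u p.1)

section WeightedGap

variable {k ε x t : ℝ} {u : ℝ → ℝ} {w : ℝ → ℝ → ℝ}

theorem weightedGap_nonpos_iff : weightedGap k u w (x, t) ≤ 0 ↔ w x t ≤ u x := by
  rw [weightedGap, ← sub_nonpos (a := w x t)]
  exact ⟨fun h => nonpos_of_mul_nonpos_right h (exp_pos _),
    mul_nonpos_of_nonneg_of_nonpos (exp_pos _).le⟩

theorem weightedGap_le_of_sub_le (hk : 0 ≤ k) (ht : 0 ≤ t) (hε : 0 ≤ ε)
    (h : w x t - u x ≤ ε) : weightedGap k u w (x, t) ≤ ε := by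
  rcases le_total (w x t - u x) 0 with hneg | hpos
  · exact (weightedGap_nonpos_iff.2 (sub_nonpos.1 hneg)).trans hε
  · calc weightedGap k u w (x, t) ≤ 1 * (w x t - u x) :=
          mul_le_mul_of_nonneg_right (exp_le_one_iff.2 (neg_nonpos.2 (mul_nonneg hk ht))) hpos
      _ ≤ ε := by rwa [one_mul]

end WeightedGap

section Comparison

variable {lam t₀ : ℝ} {G : Polynomial ℝ} {u : ℝ → ℝ} {w : ℝ → ℝ → ℝ}

theorem le_of_isMaxOn_weightedGap (hlam : 0 < lam) (hG : ∀ n, 0 ≤ G.coeff n)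
    (hu : IsStationarySolution_s7 lam G u) (hw : IsParabolicSolution lam t₀ G w)
    {R t₁ x t : ℝ} (hx : x ∈ Ioo 0 R) (ht : t ∈ Ioo 0 t₀) (htt₁ : t ≤ t₁)
    (hu_nonneg : 0 ≤ u x) (hw_le_one : w x t ≤ 1)
    (hmax : IsMaxOn (weightedGap (lam * G.derivative.eval 1) u w) (Icc 0 R ×ˢ Icc 0 t₁) (x, t)) :
    w x t ≤ u x := by
  have hspace : IsLocalMax (fun y => w y t - u y) x := by
    filter_upwards [Ioo_mem_nhds hx.1 hx.2] with y hy
    exact le_of_mul_le_mul_left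
      (isMaxOn_iff.1 hmax (y, t) ⟨Ioo_subset_Icc_self hy, ht.1.le, htt₁⟩) (exp_pos _)
  exact le_of_isLocalMax_of_isMaxOn_exp_mul hlam hG (hu.contDiffAt hx.1)
    (hw.contDiffAt_space hx.1 ht) (hw.differentiableAt_time hx.1 ht) (hu.ode_deriv hx.1)
    (hw.pde x hx.1 t ht) hu_nonneg hw_le_one hspace ht.1
    (isMaxOn_iff.2 fun s hs =>
      isMaxOn_iff.1 hmax (x, s) ⟨Ioo_subset_Icc_self hx, hs.1, hs.2.trans htt₁⟩)

theorem weightedGap_le_of_right_edge (hlam : 0 < lam) (hG : ∀ n, 0 ≤ G.coeff n)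
    (hu : IsStationarySolution_s7 lam G u) (hw : IsParabolicSolution lam t₀ G w) (hu0 : u 0 = 0)
    (hu_nonneg : ∀ x ≥ 0, 0 ≤ u x) (hw_le_one : ∀ x ≥ 0, ∀ t ∈ Icc 0 t₀, w x t ≤ 1)
    (hw0 : ∀ t ∈ Icc 0 t₀, w 0 t ≤ 0) (hinit : ∀ x ≥ 0, w x 0 ≤ u x)
    {R t₁ ε : ℝ} (hR : 0 ≤ R) (ht₁ : t₁ ∈ Ioo 0 t₀) (hε : 0 ≤ ε)
    (hright : ∀ t ∈ Icc 0 t₁, weightedGap (lam * G.derivative.eval 1) u w (R, t) ≤ ε) :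
    ∀ p ∈ Icc 0 R ×ˢ Icc 0 t₁, weightedGap (lam * G.derivative.eval 1) u w p ≤ ε := by
  set k := lam * G.derivative.eval 1
  have hsub : Icc 0 R ×ˢ Icc 0 t₁ ⊆ Ici 0 ×ˢ Icc 0 t₀ :=
    prod_mono Icc_subset_Ici_self (Icc_subset_Icc_right ht₁.2.le)
  have hcont : ContinuousOn (weightedGap k u w) (Icc 0 R ×ˢ Icc 0 t₁) :=
    (continuous_exp.comp (continuous_const.mul continuous_snd).neg).continuousOn.mul
      ((hw.continuousOn.mono hsub).sub
        (hu.contDiffOn.continuousOn.comp continuous_fst.continuousOn fun p hp => (hsub hp).1))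
  obtain ⟨⟨x, t⟩, ⟨hx, ht⟩, hmax⟩ := (isCompact_Icc.prod isCompact_Icc).exists_isMaxOn
    ⟨(0, 0), left_mem_Icc.2 hR, left_mem_Icc.2 ht₁.1.le⟩ hcont
  suffices weightedGap k u w (x, t) ≤ ε from fun p hp => (hmax hp).trans this
  have htt₀ : t ∈ Icc 0 t₀ := ⟨ht.1, ht.2.trans ht₁.2.le⟩
  rcases hx.1.eq_or_lt with rfl | hx0
  · exact (weightedGap_nonpos_iff.2 ((hw0 t htt₀).trans hu0.ge)).trans hε
  rcases ht.1.eq_or_lt with rfl | ht0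
  · exact (weightedGap_nonpos_iff.2 (hinit x hx.1)).trans hε
  rcases hx.2.eq_or_lt with rfl | hxR
  · exact hright t ht
  exact (weightedGap_nonpos_iff.2 (le_of_isMaxOn_weightedGap hlam hG hu hw ⟨hx0, hxR⟩
    ⟨ht0, ht.2.trans_lt ht₁.2⟩ ht.2 (hu_nonneg x hx.1) (hw_le_one x hx.1 t htt₀) hmax)).trans hε

theorem le_of_mem_Ico_of_tendsto_iSup_abs_sub (hlam : 0 < lam) (hG : ∀ n, 0 ≤ G.coeff n)
    (hu : IsStationarySolution_s7 lam G u) (hw : IsParabolicSolution lam t₀ G w) (hu0 : u 0 = 0)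
    (hubd : ∀ x ≥ 0, 0 ≤ u x ∧ u x ≤ 1) (hwbd : ∀ x ≥ 0, ∀ t ∈ Icc 0 t₀, 0 ≤ w x t ∧ w x t ≤ 1)
    (hw0 : ∀ t ∈ Icc 0 t₀, w 0 t ≤ 0) (hinit : ∀ x ≥ 0, w x 0 ≤ u x)
    (hinf : Tendsto (fun x => ⨆ t : Icc 0 t₀, |u x - w x t|) atTop (𝓝 0)) :
    ∀ x ≥ 0, ∀ t ∈ Ico 0 t₀, w x t ≤ u x := by
  intro x hx t ht
  set k := lam * G.derivative.eval 1
  have hk : 0 ≤ k := mul_nonneg hlam.le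
    (G.derivative.eval_nonneg_of_coeff_nonneg (G.coeff_derivative_nonneg_s7 hG) zero_le_one)
  obtain ⟨t₁, htt₁, ht₁t₀⟩ := exists_between ht.2
  rw [← weightedGap_nonpos_iff (k := k)]
  refine le_of_forall_pos_le_add fun ε hε => ?_
  rw [zero_add]
  obtain ⟨R, hR⟩ := eventually_atTop.1 (hinf.eventually (eventually_lt_nhds hε))
  have hfar : ∀ y ≥ max R 0, ∀ s ∈ Icc 0 t₁, weightedGap k u w (y, s) ≤ ε := by
    intro y hy s hs
    have hy0 : 0 ≤ y := le_of_max_le_right hy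
    have hbdd : BddAbove (range fun t : Icc 0 t₀ => |u y - w y t|) := by
      refine ⟨1, forall_mem_range.2 fun t => abs_sub_le_iff.2 ⟨?_, ?_⟩⟩ <;>
        linarith [hubd y hy0, hwbd y hy0 t t.2]
    refine weightedGap_le_of_sub_le hk hs.1 hε.le ?_
    calc w y s - u y ≤ |u y - w y s| := by rw [abs_sub_comm]; exact le_abs_self _
      _ ≤ ⨆ t : Icc 0 t₀, |u y - w y t| := le_ciSup hbdd ⟨s, hs.1, hs.2.trans ht₁t₀.le⟩
      _ ≤ ε := (hR y (le_of_max_le_left hy)).le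
  rcases le_total x (max R 0) with hxR | hxR
  · exact weightedGap_le_of_right_edge hlam hG hu hw hu0 (fun y hy => (hubd y hy).1)
      (fun y hy s hs => (hwbd y hy s hs).2) hw0 hinit (le_max_right _ _)
      ⟨ht.1.trans_lt htt₁, ht₁t₀⟩ hε.le (hfar _ le_rfl) (x, t) ⟨⟨hx, hxR⟩, ht.1, htt₁.le⟩
  · exact hfar x hxR t ⟨ht.1, htt₁.le⟩

end Comparison

theorem stmt_7_general (lam t₀ : ℝ) (hlam : 0 < lam) (ht₀ : 0 < t₀)
    (G : Polynomial ℝ) (hGnn : ∀ n, 0 ≤ G.coeff n)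
    (u : ℝ → ℝ) (hureg : ContDiffOn ℝ 2 u (Set.Ici 0))
    (huode : ∀ x ≥ 0, (1 / 2) * iteratedDerivWithin 2 u (Set.Ici 0) x
      + lam * (G.eval (u x) - u x) = 0)
    (hu0 : u 0 = 0)
    (hubd : ∀ x ≥ 0, 0 ≤ u x ∧ u x ≤ 1)
    (w : ℝ → ℝ → ℝ)
    (hwc : ContinuousOn (fun p : ℝ × ℝ => w p.1 p.2) (Set.Ici 0 ×ˢ Set.Icc 0 t₀))
    (hwx : ∀ t ∈ Set.Ioo 0 t₀, ContDiffOn ℝ 2 (fun x => w x t) (Set.Ioi 0))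
    (hwt : ∀ x ∈ Set.Ioi (0 : ℝ), ContDiffOn ℝ 1 (fun t => w x t) (Set.Ioo 0 t₀))
    (hpde : ∀ x ∈ Set.Ioi (0 : ℝ), ∀ t ∈ Set.Ioo 0 t₀,
      deriv (fun s => w x s) t
        = (1 / 2) * deriv (deriv fun y => w y t) x
          + lam * (G.eval (w x t) - w x t))
    (hwbd : ∀ x ≥ 0, ∀ t ∈ Set.Icc 0 t₀, 0 ≤ w x t ∧ w x t ≤ 1)
    (hw0 : ∀ t ∈ Set.Icc 0 t₀, w 0 t ≤ 0)
    (hinit : ∀ x ≥ 0, w x 0 ≤ u x)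
    (hinf : Filter.Tendsto (fun x => ⨆ t : Set.Icc 0 t₀, |u x - w x t|)
      Filter.atTop (nhds 0)) :
    ∀ x ≥ 0, ∀ t ∈ Set.Icc 0 t₀, w x t ≤ u x := by
  have hlt := le_of_mem_Ico_of_tendsto_iSup_abs_sub hlam hGnn ⟨hureg, huode⟩
    ⟨hwc, hwx, hwt, hpde⟩ hu0 hubd hwbd hw0 hinit hinf
  intro x hx t ht
  have hcont : ContinuousOn (fun s => w x s) (Icc 0 t₀) :=
    hwc.comp (continuous_const.prodMk continuous_id).continuousOn fun s hs => ⟨hx, hs⟩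
  refine le_on_closure (hlt x hx) ?_ continuousOn_const ?_ <;> rwa [closure_Ico ht₀.ne]

/-- Maximum-principle comparison for probabilistic polynomial parabolic
equations: a stationary solution u dominates any [0,1]-valued solution w of
the parabolic equation starting below it, nonpositive at the spatial boundary,
and agreeing with u at infinity uniformly in t. -/
theorem stmt_7 (lam t₀ : ℝ) (hlam : 0 < lam) (ht₀ : 0 < t₀)
    (G : Polynomial ℝ) (hGnn : ∀ n, 0 ≤ G.coeff n) (hG1 : G.eval 1 = 1)
    (u : ℝ → ℝ) (hureg : ContDiffOn ℝ 2 u (Set.Ici 0))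
    (huode : ∀ x ≥ 0, (1 / 2) * iteratedDerivWithin 2 u (Set.Ici 0) x
      + lam * (G.eval (u x) - u x) = 0)
    (hu0 : u 0 = 0)
    (hubd : ∀ x ≥ 0, 0 ≤ u x ∧ u x ≤ 1)
    (w : ℝ → ℝ → ℝ)
    (hwc : ContinuousOn (fun p : ℝ × ℝ => w p.1 p.2) (Set.Ici 0 ×ˢ Set.Icc 0 t₀))
    (hwx : ∀ t ∈ Set.Ioo 0 t₀, ContDiffOn ℝ 2 (fun x => w x t) (Set.Ioi 0))
    (hwt : ∀ x ∈ Set.Ioi (0 : ℝ), ContDiffOn ℝ 1 (fun t => w x t) (Set.Ioo 0 t₀))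
    (hpde : ∀ x ∈ Set.Ioi (0 : ℝ), ∀ t ∈ Set.Ioo 0 t₀,
      deriv (fun s => w x s) t
        = (1 / 2) * deriv (deriv fun y => w y t) x
          + lam * (G.eval (w x t) - w x t))
    (hwbd : ∀ x ≥ 0, ∀ t ∈ Set.Icc 0 t₀, 0 ≤ w x t ∧ w x t ≤ 1)
    (hw0 : ∀ t ∈ Set.Icc 0 t₀, w 0 t ≤ 0)
    (hinit : ∀ x ≥ 0, w x 0 ≤ u x)
    (hinf : Filter.Tendsto (fun x => ⨆ t : Set.Icc 0 t₀, |u x - w x t|)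
      Filter.atTop (nhds 0)) :
    ∀ x ≥ 0, ∀ t ∈ Set.Icc 0 t₀, w x t ≤ u x :=
  stmt_7_general lam t₀ hlam ht₀ G hGnn u hureg huode hu0 hubd w hwc hwx hwt hpde hwbd hw0 hinit
    hinf
end

section
/- Let λ > 0. If u : ℝ → ℝ is twice continuously differentiable on [0, ∞), satisfies (1/2)·u''(x) + (λ/2)·(u(x) − 1)² = 0 for all x ≥ 0, u(0) = 0, and u(x) ≥ 0 for all x ≥ 0, then u(x) ≤ 1 for all x ≥ 0; consequently u(x) = 1 − 1/(√(λ/6)·x + 1)² for all x ≥ 0. -/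
/-!
With `v = u'`, the equation is the system `u' = v`, `v' = -λ(u - 1)²`, which conserves the energy
`v²/2 + λ/3·(u - 1)³`. As `v` is nonincreasing, `v < 0` somewhere would push `u` below `0`; so
`v ≥ 0`, `u` is nondecreasing, and `u > 1` somewhere would make `v` decrease at a fixed positive
rate, so `u ≤ 1`. With `u(0) = 0` and `0 ≤ u ≤ 1` the energy must vanish: a negative energy keeps
`v' ≤ -c < 0` and a positive one keeps `v ≥ c > 0`. Zero energy yields the first-order equation
`u' = 2√(λ/6)·(1 - u)^(3/2)`, whose right-hand side is Lipschitz on `[0, 1]`, so `u` is its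
explicit solution with `u(0) = 0`.
-/

open Set

section HalfLine

variable {g g' : ℝ → ℝ} {a : ℝ}

theorem le_add_mul_of_hasDerivWithinAt_le
    (hg : ∀ x ∈ Ici a, HasDerivWithinAt g (g' x) (Ici a) x) {C : ℝ}
    (hC : ∀ x ∈ Ici a, g' x ≤ C) {x : ℝ} (hx : a ≤ x) : g x ≤ g a + C * (x - a) := by
  refine image_le_of_deriv_right_le_deriv_boundary (B := fun y => g a + C * (y - a))
    (fun y hy => (hg y hy.1).continuousWithinAt.mono Icc_subset_Ici_self)
    (fun y hy => (hg y hy.1).mono (Ici_subset_Ici.mpr hy.1)) (by simp) (by fun_prop)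
    (fun y _ => ?_) (fun y hy => hC y hy.1) ⟨hx, le_rfl⟩
  simpa using (((hasDerivWithinAt_id y _).sub_const a).const_mul C).const_add (g a)

theorem exists_neg_of_hasDerivWithinAt_le_neg
    (hg : ∀ x ∈ Ici a, HasDerivWithinAt g (g' x) (Ici a) x) {k : ℝ} (hk : 0 < k)
    (hle : ∀ x ∈ Ici a, g' x ≤ -k) : ∃ x ∈ Ici a, g x < 0 := by
  have hx : a ≤ a + (|g a| + 1) / k := le_add_of_nonneg_right (by positivity)
  refine ⟨_, hx, ?_⟩
  have := le_add_mul_of_hasDerivWithinAt_le hg hle hx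
  rw [add_sub_cancel_left, neg_mul, mul_div_cancel₀ _ hk.ne'] at this
  linarith [le_abs_self (g a)]

theorem forall_hasDerivWithinAt_Ici_of_le
    (hg : ∀ x ∈ Ici a, HasDerivWithinAt g (g' x) (Ici a) x) {b : ℝ} (hab : a ≤ b) :
    ∀ x ∈ Ici b, HasDerivWithinAt g (g' x) (Ici b) x :=
  fun x hx => (hg x (hab.trans hx)).mono (Ici_subset_Ici.mpr hab)

end HalfLine

structure IsStationarySolution_s8 (lam : ℝ) (u v : ℝ → ℝ) : Prop where
  hasDerivWithinAt_fst : ∀ x ∈ Ici 0, HasDerivWithinAt u (v x) (Ici 0) x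
  hasDerivWithinAt_snd : ∀ x ∈ Ici 0, HasDerivWithinAt v (-(lam * (u x - 1) ^ 2)) (Ici 0) x

namespace IsStationarySolution_s8

variable {lam : ℝ} {u v : ℝ → ℝ}

theorem of_contDiffOn (hreg : ContDiffOn ℝ 2 u (Ici 0))
    (hode : ∀ x ≥ 0, (1 / 2) * iteratedDerivWithin 2 u (Ici 0) x + (lam / 2) * (u x - 1) ^ 2 = 0) :
    IsStationarySolution_s8 lam u (derivWithin u (Ici 0)) where
  hasDerivWithinAt_fst x hx :=
    (hreg.differentiableOn two_ne_zero x hx).hasDerivWithinAt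
  hasDerivWithinAt_snd x hx := by
    have hdiff := (hreg.derivWithin (uniqueDiffOn_Ici 0) (m := 1) (by norm_num)).differentiableOn
      one_ne_zero x hx
    refine hdiff.hasDerivWithinAt.congr_deriv ?_
    have hx2 := hode x hx
    rw [iteratedDerivWithin_eq_iterate] at hx2
    simp only [Function.iterate_succ, Function.iterate_zero, Function.comp_apply, id] at hx2
    linarith

theorem antitoneOn_snd (h : IsStationarySolution_s8 lam u v) (hlam : 0 ≤ lam) :
    AntitoneOn v (Ici 0) :=
  antitoneOn_of_hasDerivWithinAt_nonpos (convex_Ici 0)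
    (fun x hx => (h.hasDerivWithinAt_snd x hx).continuousWithinAt)
    (fun x hx => (h.hasDerivWithinAt_snd x (interior_subset hx)).mono interior_subset)
    (fun x _ => by have := mul_nonneg hlam (sq_nonneg (u x - 1)); linarith)

theorem snd_nonneg (h : IsStationarySolution_s8 lam u v) (hlam : 0 ≤ lam)
    (hu : ∀ x ∈ Ici 0, 0 ≤ u x) : ∀ x ∈ Ici 0, 0 ≤ v x := by
  by_contra! ⟨x₀, hx₀, hneg⟩
  obtain ⟨x, hx, hux⟩ := exists_neg_of_hasDerivWithinAt_le_neg
    (forall_hasDerivWithinAt_Ici_of_le h.hasDerivWithinAt_fst hx₀) (neg_pos.mpr hneg)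
    (fun x hx => by rw [neg_neg]; exact h.antitoneOn_snd hlam hx₀ (Ici_subset_Ici.mpr hx₀ hx) hx)
  exact hux.not_ge (hu x (Ici_subset_Ici.mpr hx₀ hx))

theorem monotoneOn_fst (h : IsStationarySolution_s8 lam u v) (hv : ∀ x ∈ Ici 0, 0 ≤ v x) :
    MonotoneOn u (Ici 0) :=
  monotoneOn_of_hasDerivWithinAt_nonneg (convex_Ici 0)
    (fun x hx => (h.hasDerivWithinAt_fst x hx).continuousWithinAt)
    (fun x hx => (h.hasDerivWithinAt_fst x (interior_subset hx)).mono interior_subset)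
    (fun x hx => hv x (interior_subset hx))

theorem fst_le_one (h : IsStationarySolution_s8 lam u v) (hlam : 0 < lam)
    (hv : ∀ x ∈ Ici 0, 0 ≤ v x) : ∀ x ∈ Ici 0, u x ≤ 1 := by
  by_contra! ⟨x₀, hx₀, hgt⟩
  have hslope : ∀ x ∈ Ici x₀, -(lam * (u x - 1) ^ 2) ≤ -(lam * (u x₀ - 1) ^ 2) := by
    intro x hx
    have hux : u x₀ ≤ u x := h.monotoneOn_fst hv hx₀ (Ici_subset_Ici.mpr hx₀ hx) hx
    have : (u x₀ - 1) ^ 2 ≤ (u x - 1) ^ 2 := pow_le_pow_left₀ (by linarith) (by linarith) 2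
    nlinarith
  obtain ⟨x, hx, hvx⟩ := exists_neg_of_hasDerivWithinAt_le_neg
    (forall_hasDerivWithinAt_Ici_of_le h.hasDerivWithinAt_snd hx₀)
    (mul_pos hlam (pow_pos (sub_pos.mpr hgt) 2)) hslope
  exact hvx.not_ge (hv x (Ici_subset_Ici.mpr hx₀ hx))

theorem energy_eq (h : IsStationarySolution_s8 lam u v) :
    ∀ x ∈ Ici 0, v x ^ 2 / 2 + lam / 3 * (u x - 1) ^ 3 =
      v 0 ^ 2 / 2 + lam / 3 * (u 0 - 1) ^ 3 := by
  have hE : ∀ x ∈ Ici 0, HasDerivWithinAt (fun y => v y ^ 2 / 2 + lam / 3 * (u y - 1) ^ 3) 0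
      (Ici 0) x := fun x hx => by
    refine ((((h.hasDerivWithinAt_snd x hx).pow 2).div_const 2).add
      ((((h.hasDerivWithinAt_fst x hx).sub_const 1).pow 3).const_mul (lam / 3))).congr_deriv ?_
    push_cast
    ring
  intro x hx
  exact constant_of_has_deriv_right_zero
    (fun y hy => (hE y hy.1).continuousWithinAt.mono Icc_subset_Ici_self)
    (fun y hy => (hE y hy.1).mono (Ici_subset_Ici.mpr hy.1)) x ⟨hx, le_rfl⟩

theorem sq_snd_zero (h : IsStationarySolution_s8 lam u v) (hlam : 0 < lam) (h0 : u 0 = 0)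
    (hu : ∀ x ∈ Ici 0, u x ∈ Icc 0 1) (hv : ∀ x ∈ Ici 0, 0 ≤ v x) :
    v 0 ^ 2 = 2 * lam / 3 := by
  have hE := h.energy_eq
  simp only [h0] at hE
  rcases lt_trichotomy (v 0 ^ 2) (2 * lam / 3) with hlt | heq | hgt
  · have hslope : ∀ x ∈ Ici 0, -(lam * (u x - 1) ^ 2) ≤ -(lam - 3 / 2 * v 0 ^ 2) := by
      intro x hx
      -- `λ(u - 1)²·u ≥ 0` gives `λ(u - 1)² ≥ -λ(u - 1)³ ≥ λ - 3/2·v(0)²` by the energy identity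
      nlinarith [mul_nonneg (mul_nonneg hlam.le (sq_nonneg (u x - 1))) (hu x hx).1,
        sq_nonneg (v x), hE x hx]
    obtain ⟨x, hx, hvx⟩ :=
      exists_neg_of_hasDerivWithinAt_le_neg h.hasDerivWithinAt_snd (by linarith) hslope
    exact absurd (hv x hx) hvx.not_ge
  · exact heq
  · set m := √(v 0 ^ 2 - 2 * lam / 3)
    have hslope : ∀ x ∈ Ici 0, -v x ≤ -m := by
      intro x hx
      have : v 0 ^ 2 - 2 * lam / 3 ≤ v x ^ 2 := by
        nlinarith [mul_nonneg hlam.le (pow_nonneg (sub_nonneg.2 (hu x hx).2) 3), hE x hx]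
      simpa [Real.sqrt_sq (hv x hx)] using Real.sqrt_le_sqrt this
    obtain ⟨x, hx, hux⟩ := exists_neg_of_hasDerivWithinAt_le_neg
      (fun x hx => (h.hasDerivWithinAt_fst x hx).const_sub 1)
      (Real.sqrt_pos.2 (by linarith)) hslope
    linarith [(hu x hx).2]

theorem snd_eq (h : IsStationarySolution_s8 lam u v) (hlam : 0 < lam) (h0 : u 0 = 0)
    (hu : ∀ x ∈ Ici 0, u x ∈ Icc 0 1) (hv : ∀ x ∈ Ici 0, 0 ≤ v x) :
    ∀ x ∈ Ici 0, v x = 2 * √(lam / 6) * (1 - u x) ^ (3 / 2 : ℝ) := by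
  intro x hx
  have hE := h.energy_eq x hx
  rw [h0, h.sq_snd_zero hlam h0 hu hv] at hE
  have hu1 : 0 ≤ 1 - u x := sub_nonneg.2 (hu x hx).2
  rw [← sq_eq_sq₀ (hv x hx) (by positivity), mul_pow, mul_pow,
    ← Real.rpow_mul_natCast hu1, Real.sq_sqrt (by positivity)]
  norm_num
  linear_combination 2 * hE

end IsStationarySolution_s8

theorem hasDerivAt_one_sub_one_div_sq {s x : ℝ} (hx : 0 < s * x + 1) :
    HasDerivAt (fun x => 1 - 1 / (s * x + 1) ^ 2)
      (2 * s * (1 - (1 - 1 / (s * x + 1) ^ 2)) ^ (3 / 2 : ℝ)) x := by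
  have hpow : (1 - (1 - 1 / (s * x + 1) ^ 2)) ^ (3 / 2 : ℝ) = 1 / (s * x + 1) ^ 3 := by
    rw [sub_sub_cancel, ← one_div_pow, ← Real.rpow_natCast_mul (by positivity)]
    norm_num
  have hlin : HasDerivAt (fun x => s * x + 1) s x := by
    simpa using ((hasDerivAt_id x).const_mul s).add_const 1
  rw [hpow]
  simp only [one_div]
  refine (((hlin.fun_pow 2).inv (by positivity)).const_sub 1).congr_deriv ?_
  field_simp
  ring

theorem eq_one_sub_one_div_sq_of_hasDerivWithinAt {s : ℝ} (hs : 0 ≤ s) {u : ℝ → ℝ}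
    (hu : ∀ x ∈ Ici 0, HasDerivWithinAt u (2 * s * (1 - u x) ^ (3 / 2 : ℝ)) (Ici 0) x)
    (h0 : u 0 = 0) (hmem : ∀ x ∈ Ici 0, u x ∈ Icc 0 1) :
    ∀ x ∈ Ici 0, u x = 1 - 1 / (s * x + 1) ^ 2 := by
  obtain ⟨K, hK⟩ : ∃ K, LipschitzOnWith K (fun y : ℝ => 2 * s * (1 - y) ^ (3 / 2 : ℝ)) (Icc 0 1) :=
    (contDiff_const.mul ((Real.contDiff_rpow_const_of_le (n := 1) (by norm_num)).comp
      (contDiff_const.sub contDiff_id))).contDiffOn.exists_lipschitzOnWith one_ne_zero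
      (convex_Icc 0 1) isCompact_Icc
  set w : ℝ → ℝ := fun x => 1 - 1 / (s * x + 1) ^ 2
  have hw : ∀ x ∈ Ici (0 : ℝ), HasDerivAt w (2 * s * (1 - w x) ^ (3 / 2 : ℝ)) x :=
    fun x hx => hasDerivAt_one_sub_one_div_sq (by nlinarith [mul_nonneg hs hx])
  have hwmem : ∀ x ∈ Ici (0 : ℝ), w x ∈ Icc 0 1 := by
    intro x hx
    have hA : 1 ≤ (s * x + 1) ^ 2 := one_le_pow₀ (by nlinarith [mul_nonneg hs hx])
    have : 1 / (s * x + 1) ^ 2 ≤ 1 := div_le_one_of_le₀ hA (by positivity)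
    exact ⟨by linarith, by simp only [w]; linarith [show 0 < 1 / (s * x + 1) ^ 2 by positivity]⟩
  intro x hx
  exact ODE_solution_unique_of_mem_Icc_right (v := fun _ y => 2 * s * (1 - y) ^ (3 / 2 : ℝ))
    (s := fun _ => Icc 0 1) (fun _ _ => hK)
    (fun t ht => (hu t ht.1).continuousWithinAt.mono Icc_subset_Ici_self)
    (fun t ht => (hu t ht.1).mono (Ici_subset_Ici.mpr ht.1)) (fun t ht => hmem t ht.1)
    (fun t ht => (hw t ht.1).continuousAt.continuousWithinAt)
    (fun t ht => (hw t ht.1).hasDerivWithinAt) (fun t ht => hwmem t ht.1) (by simp [w, h0])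
    ⟨hx, le_rfl⟩

/-- Any nonnegative C² solution of the stationary equation with u(0) = 0 is
bounded above by 1, and consequently equals the explicit solution
1 − 1/(√(λ/6)·x + 1)². -/
theorem stmt_8 (lam : ℝ) (hlam : 0 < lam) (u : ℝ → ℝ)
    (hreg : ContDiffOn ℝ 2 u (Set.Ici 0))
    (hode : ∀ x ≥ 0, (1 / 2) * iteratedDerivWithin 2 u (Set.Ici 0) x
      + (lam / 2) * (u x - 1) ^ 2 = 0)
    (h0 : u 0 = 0)
    (hnn : ∀ x ≥ 0, 0 ≤ u x) :
    (∀ x ≥ 0, u x ≤ 1) ∧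
      ∀ x ≥ 0, u x = 1 - 1 / (Real.sqrt (lam / 6) * x + 1) ^ 2 := by
  have h := IsStationarySolution_s8.of_contDiffOn hreg hode
  have hv := h.snd_nonneg hlam.le hnn
  have hle := h.fst_le_one hlam hv
  have hmem : ∀ x ∈ Ici 0, u x ∈ Icc 0 1 := fun x hx => ⟨hnn x hx, hle x hx⟩
  refine ⟨hle, eq_one_sub_one_div_sq_of_hasDerivWithinAt (Real.sqrt_nonneg _) ?_ h0 hmem⟩
  intro x hx
  rw [← h.snd_eq hlam h0 hmem hv x hx]
  exact h.hasDerivWithinAt_fst x hx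
end
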